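/- arXiv:2012.14966 — 7 statements merged into one kernel-verified Lean document; each statement's English description precedes it below -/
import Mathlib

section
/- Let n be a power of 2 and let P be an n × n permutation matrix over ℂ. Then P ∈ BB*; that is, there exist butterfly matrices M1, M2 of size n such that P = M1 · M2*. -/
noncomputable section

open Matrix

/-- A butterfly factor matrix of size `n` with block size `k`: a block-diagonal matrix
whose `n/k` diagonal blocks are butterfly factors of size `k`, i.e. `k × k` matrices of
the block form `[[D1, D2], [D3, D4]]` with each `Dᵢ` a `(k/2) × (k/2)` diagonal matrix.
Equivalently, nonzero entries may occur only at positions `(i, j)` lying in the same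
diagonal `k × k` block and with `i ≡ j (mod k/2)`. -/
def IsButterflyFactorMatrix (n k : ℕ) (B : Matrix (Fin n) (Fin n) ℂ) : Prop :=
  2 ≤ k ∧ k ∣ n ∧
    ∀ i j : Fin n, B i j ≠ 0 →
      i.val / k = j.val / k ∧ i.val % (k / 2) = j.val % (k / 2)

/-- A butterfly matrix of size `n = 2^b`: a product `B_n · B_{n/2} · ⋯ · B_2` where `B_k`
is a butterfly factor matrix of size `n` with block size `k`. -/
def IsButterflyMatrix (n : ℕ) (M : Matrix (Fin n) (Fin n) ℂ) : Prop :=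
  ∃ b : ℕ, n = 2 ^ b ∧
    ∃ B : ℕ → Matrix (Fin n) (Fin n) ℂ,
      (∀ t, 1 ≤ t → t ≤ b → IsButterflyFactorMatrix n (2 ^ t) (B t)) ∧
      M = (List.ofFn fun t : Fin b => B (b - t.val)).prod

/-- `M ∈ BB*`: `M = M1 · M2ᴴ` with `M1`, `M2` butterfly matrices. -/
def InBBStar (n : ℕ) (M : Matrix (Fin n) (Fin n) ℂ) : Prop :=
  ∃ M1 M2 : Matrix (Fin n) (Fin n) ℂ,
    IsButterflyMatrix n M1 ∧ IsButterflyMatrix n M2 ∧ M = M1 * M2ᴴ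

/-- `M ∈ (BB*)^w`: `M` is a product of `w` matrices each in `BB*`. -/
def InBBStarPow (n w : ℕ) (M : Matrix (Fin n) (Fin n) ℂ) : Prop :=
  ∃ f : Fin w → Matrix (Fin n) (Fin n) ℂ,
    (∀ i, InBBStar n (f i)) ∧ M = (List.ofFn f).prod

/-- `M ∈ (BB*)^w_e`: `M` (of size `n × n`) is the upper-left `n × n` corner of an
`en × en` matrix `E ∈ (BB*)^w`. -/
def InBBStarPowExp (n w e : ℕ) (M : Matrix (Fin n) (Fin n) ℂ) : Prop :=
  ∃ E : Matrix (Fin (e * n)) (Fin (e * n)) ℂ,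
    InBBStarPow (e * n) w E ∧
    ∀ (i j : Fin n) (hi : i.val < e * n) (hj : j.val < e * n),
      M i j = E ⟨i.val, hi⟩ ⟨j.val, hj⟩

/-- `P` is a permutation matrix. -/
def IsPermutationMatrix (n : ℕ) (P : Matrix (Fin n) (Fin n) ℂ) : Prop :=
  ∃ σ : Equiv.Perm (Fin n), ∀ i j, P i j = if i = σ j then 1 else 0

/-- `M` (with at most one nonzero entry per column) meets the `s` balance condition:
partitioning the columns into consecutive chunks of size `s`, every chunk contains, for
each residue `0 ≤ m < s`, exactly one column whose nonzero entry lies in a row with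
index `≡ m (mod s)`. -/
def MeetsBalance (n s : ℕ) (M : Matrix (Fin n) (Fin n) ℂ) : Prop :=
  ∀ c < n / s, ∀ m < s,
    {j : Fin n | j.val / s = c ∧ ∃ i : Fin n, M i j ≠ 0 ∧ i.val % s = m}.ncard = 1

/-- `M` is modular-balanced: it meets the `2^j` balance condition for all `2 ≤ 2^j ≤ n`. -/
def ModularBalanced (n : ℕ) (M : Matrix (Fin n) (Fin n) ℂ) : Prop :=
  ∀ j : ℕ, 1 ≤ j → 2 ^ j ≤ n → MeetsBalance n (2 ^ j) M

/-- `H` is a horizontal step matrix: whenever `H[i,j] ≠ 0` and `H[i',j'] ≠ 0` with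
`j ≤ j'`, we have `j' - j ≥ (i' - i) mod n`. -/
def IsHorizontalStep (n : ℕ) (H : Matrix (Fin n) (Fin n) ℂ) : Prop :=
  ∀ i i' j j' : Fin n, j.val ≤ j'.val → H i j ≠ 0 → H i' j' ≠ 0 →
    ((i'.val : ℤ) - (i.val : ℤ)) % (n : ℤ) ≤ (j'.val : ℤ) - (j.val : ℤ)

/-- Reversal of the `b` low-order bits of `x`. -/
def bitRev (b x : ℕ) : ℕ :=
  (Finset.range b).sum fun t => x / 2 ^ t % 2 * 2 ^ (b - 1 - t)


/-
A permutation matrix of size `2^(b+1)` factors, as in a Beneš network, as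
`X · diag(P₀, P₁) · Y` where `X` and `Y` only move entries between positions `i` and
`i ± 2^b` and `P₀, P₁` are permutation matrices of half size. Such `X` and `Y` are
butterfly factors of full block size, so induction on `b` writes `P = M₁ M₂ᴴ` with
`M₁ = X · diag(M₁⁰, M₁¹)` and `M₂ = Yᴴ · diag(M₂⁰, M₂¹)`.

To find `X` and `Y`, let `u` swap `i` and `i ± 2^b`, and let `v = σ⁻¹ u σ`. Both are
fixed-point-free involutions, so the graph with edges `x — u x` and `x — v x` is a union of
even cycles and has a proper 2-colouring; `Y` sends each input to the half given by its
colour, and `X⁻¹` sends each output `y` to the half given by the colour of `σ⁻¹ y`.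
-/

open Equiv Equiv.Perm

namespace Equiv.Perm

section Coloring

variable {α : Type*} {u v : Perm α}

theorem inv_apply_eq_of_apply_eq {δ : Type*} {π : Perm α} (f : α → δ)
    (h : ∀ x, f (π x) = f x) (x : α) : f (π⁻¹ x) = f x := by
  simpa using (h (π⁻¹ x)).symm

theorem apply_zpow_mul_apply_of_involutive (hu : Function.Involutive u)
    (hv : Function.Involutive v) (m : ℤ) (x : α) :
    u (((u * v) ^ m) x) = ((u * v) ^ (-m)) (u x) := by
  have hconj : SemiconjBy u (u * v) (u * v)⁻¹ := by
    ext y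
    simp [hu (v y), Equiv.eq_symm_apply, hv y]
  rw [_root_.zpow_neg, ← _root_.inv_zpow, ← Perm.mul_apply, (hconj.zpow_right m).eq,
    Perm.mul_apply]

theorem not_sameCycle_mul_apply_self (hu : Function.Involutive u) (hv : Function.Involutive v)
    (hu₀ : ∀ x, u x ≠ x) (hv₀ : ∀ x, v x ≠ x) (x : α) : ¬ (u * v).SameCycle x (u x) := by
  set g := u * v
  -- If `g ^ k x = u x`, then `g ^ s x` is fixed by `u` (if `k = 2 s`) or by `v` (if `k = 2 s + 1`).
  rintro ⟨k, hk⟩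
  obtain ⟨s, rfl | rfl⟩ := Int.even_or_odd' k
  · apply hu₀ ((g ^ s) x)
    rw [apply_zpow_mul_apply_of_involutive hu hv, ← hk, ← Perm.mul_apply, ← _root_.zpow_add]
    congr 2; ring
  · apply hv₀ ((g ^ s) x)
    apply hu.injective
    change g ((g ^ s) x) = _
    rw [apply_zpow_mul_apply_of_involutive hu hv, ← hk, ← Perm.mul_apply, ← Perm.mul_apply,
      ← _root_.zpow_add, ← _root_.zpow_one_add]
    congr 2; ring

theorem exists_fin_two_coloring_of_involutive (hu : Function.Involutive u)
    (hv : Function.Involutive v) (hu₀ : ∀ x, u x ≠ x) (hv₀ : ∀ x, v x ≠ x) :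
    ∃ c : α → Fin 2, ∀ x, c (u x) ≠ c x ∧ c (v x) ≠ c x := by
  let _ := IsWellOrder.linearOrder (WellOrderingRel (α := α))
  set g := u * v
  let rep : α → α := fun x => (Quotient.mk (SameCycle.setoid g) x).out
  have hrep : ∀ x y, rep x = rep y ↔ g.SameCycle x y := fun _ _ =>
    Quotient.out_inj.trans Quotient.eq
  have hrep_u : ∀ x, rep x ≠ rep (u x) := fun x h =>
    not_sameCycle_mul_apply_self hu hv hu₀ hv₀ x ((hrep _ _).1 h)
  have hrep_v : ∀ x, rep (v x) = rep (u x) ∧ rep (u (v x)) = rep x := fun x => by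
    have hvx : v x = (g ^ (-1 : ℤ)) (u x) := by
      rw [← apply_zpow_mul_apply_of_involutive hu hv, zpow_one]
      exact (hu (v x)).symm
    refine ⟨(hrep _ _).2 ?_, (hrep _ _).2 (SameCycle.refl g x).apply_left⟩
    rw [hvx]
    exact sameCycle_zpow_left.2 (SameCycle.refl g _)
  have hflip : ∀ a b : α, a ≠ b →
      (if b < a then (0 : Fin 2) else 1) ≠ if a < b then 0 else 1 := fun a b hab => by
    rcases hab.lt_or_gt with h | h <;> simp [h, h.not_gt]
  -- `u` and `v` both map the `g`-cycle of `x` to that of `u x`, which is a different cycle.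
  refine ⟨fun x => if rep x < rep (u x) then 0 else 1, fun x => ⟨?_, ?_⟩⟩
  · simpa only [hu x] using hflip _ _ (hrep_u x)
  · simpa only [(hrep_v x).1, (hrep_v x).2] using hflip _ _ (hrep_u x)

end Coloring

section Benes

variable {β : Type*}

theorem exists_perm_apply_eq_mk (f : β × Fin 2 → Fin 2) (hf : ∀ i, f (i, 0) ≠ f (i, 1)) :
    ∃ Y : Perm (β × Fin 2), ∀ x, Y x = (x.1, f x) := by
  refine ⟨Equiv.ofBijective _ ⟨?_, fun ⟨i, d⟩ => ?_⟩, fun _ => rfl⟩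
  · rintro ⟨i, c⟩ ⟨j, d⟩ h
    obtain ⟨rfl, h⟩ := Prod.mk.inj h
    fin_cases c <;> fin_cases d <;> simp_all [eq_comm]
  · have hfin2 : ∀ a a' d : Fin 2, a ≠ a' → d = a ∨ d = a' := by decide
    obtain h | h := hfin2 _ _ d (hf i)
    exacts [⟨(i, 0), by simp [h]⟩, ⟨(i, 1), by simp [h]⟩]

theorem exists_eq_prodCongrLeft {γ : Type*} (μ : Perm (β × γ)) (hμ : ∀ x, (μ x).2 = x.2) :
    ∃ τ : γ → Perm β, μ = prodCongrLeft τ := by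
  have hmk : ∀ i c, ((μ (i, c)).1, c) = μ (i, c) := fun i c => Prod.ext rfl (hμ (i, c)).symm
  have hmk' : ∀ i c, ((μ⁻¹ (i, c)).1, c) = μ⁻¹ (i, c) := fun i c =>
    Prod.ext rfl (inv_apply_eq_of_apply_eq Prod.snd hμ (i, c)).symm
  refine ⟨fun c => ⟨fun i => (μ (i, c)).1, fun i => (μ⁻¹ (i, c)).1, fun i => ?_, fun i => ?_⟩, ?_⟩
  · simp only [hmk]; simp
  · simp only [hmk']; simp
  · ext ⟨i, c⟩ <;> simp [hμ]

theorem exists_eq_mul_prodCongrLeft_mul (σ : Perm (β × Fin 2)) :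
    ∃ (X Y : Perm (β × Fin 2)) (τ : Fin 2 → Perm β),
      (∀ x, (X x).1 = x.1) ∧ (∀ x, (Y x).1 = x.1) ∧ σ = X * prodCongrLeft τ * Y := by
  let u : Perm (β × Fin 2) := prodCongrRight fun _ => Fin.revPerm
  have hu : Function.Involutive u := fun ⟨i, c⟩ => by simp [u]
  have hu₀ : ∀ x, u x ≠ x := fun ⟨i, c⟩ h => by
    fin_cases c <;> simp [u] at h
  have hv : Function.Involutive (σ⁻¹ * u * σ) := fun x => by simp [hu (σ x)]
  have hv₀ : ∀ x, (σ⁻¹ * u * σ) x ≠ x := fun x h => hu₀ (σ x) (by simpa [symm_apply_eq] using h)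
  obtain ⟨c, hc⟩ := exists_fin_two_coloring_of_involutive hu hv hu₀ hv₀
  obtain ⟨Y, hY⟩ := exists_perm_apply_eq_mk c fun i => (hc (i, 0)).1.symm
  obtain ⟨W, hW⟩ := exists_perm_apply_eq_mk (fun y => c (σ⁻¹ y)) fun i => by
    have h : (σ⁻¹ * u * σ) (σ⁻¹ (i, 0)) = σ⁻¹ (i, 1) := by simp [u]
    exact h ▸ (hc _).2.symm
  obtain ⟨τ, hτ⟩ := exists_eq_prodCongrLeft (W * σ * Y⁻¹) fun y => by
    conv_rhs => rw [← Y.apply_symm_apply y, hY]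
    simp [hW]
  refine ⟨W⁻¹, Y, τ, inv_apply_eq_of_apply_eq Prod.fst fun x => by rw [hW], fun x => by rw [hY],
    ?_⟩
  rw [← hτ]
  group

end Benes

end Equiv.Perm

theorem Nat.div_eq_div_of_dvd_of_mod_div_eq {i j k n : ℕ} (hkn : k ∣ n) (hdiv : i / n = j / n)
    (hmod : i % n / k = j % n / k) : i / k = j / k := by
  obtain ⟨q, rfl⟩ := hkn
  rw [Nat.mod_mul_right_div_self, Nat.mod_mul_right_div_self] at hmod
  rw [← Nat.div_div_eq_div_mul, ← Nat.div_div_eq_div_mul] at hdiv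
  rw [← Nat.div_add_mod (i / k) q, ← Nat.div_add_mod (j / k) q, hdiv, hmod]

namespace Matrix

variable {m n o R : Type*} [DecidableEq m] [Fintype m] [DecidableEq n] [Fintype n]
  [DecidableEq o] [Fintype o] [NonAssocSemiring R]

theorem permMatrixHom_apply_eq (σ : Perm n) (i j : n) :
    (permMatrixHom σ : Matrix n n R) i j = if i = σ j then 1 else 0 := by
  simp [symm_apply_eq]

theorem reindex_permMatrixHom (e : m ≃ n) (σ : Perm m) :
    reindex e e (permMatrixHom σ : Matrix m m R) = permMatrixHom (e.permCongr σ) := by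
  ext i j
  rw [reindex_apply, submatrix_apply, permMatrixHom_apply_eq, permMatrixHom_apply_eq]
  exact if_congr e.symm_apply_eq rfl rfl

theorem permMatrixHom_prodCongrLeft (τ : o → Perm m) :
    (permMatrixHom (prodCongrLeft τ) : Matrix (m × o) (m × o) R) =
      blockDiagonal fun c => permMatrixHom (τ c) := by
  ext ⟨i, c⟩ ⟨j, d⟩
  simp only [permMatrixHom_apply_eq, blockDiagonal_apply, prodCongrLeft_apply]
  rcases eq_or_ne c d with rfl | h <;> simp [*]

theorem conjTranspose_permMatrixHom {R : Type*} [NonAssocSemiring R] [StarRing R] (σ : Perm n) :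
    (permMatrixHom σ : Matrix n n R)ᴴ = permMatrixHom σ⁻¹ := by
  simp

end Matrix

section Butterfly

variable (b : ℕ)

def finHalvesEquiv : Fin (2 ^ (b + 1)) ≃ Fin (2 ^ b) × Fin 2 :=
  (finCongr (pow_succ' 2 b)).trans (finProdFinEquiv.symm.trans (Equiv.prodComm _ _))

abbrev reindexHalves :
    Matrix (Fin (2 ^ b) × Fin 2) (Fin (2 ^ b) × Fin 2) ℂ ≃ₐ[ℂ]
      Matrix (Fin (2 ^ (b + 1))) (Fin (2 ^ (b + 1))) ℂ :=
  reindexAlgEquiv ℂ ℂ (finHalvesEquiv b).symm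

variable {b}

theorem finHalvesEquiv_fst_val (i : Fin (2 ^ (b + 1))) :
    ((finHalvesEquiv b i).1 : ℕ) = i % 2 ^ b :=
  Fin.coe_modNat _

theorem finHalvesEquiv_snd_val (i : Fin (2 ^ (b + 1))) :
    ((finHalvesEquiv b i).2 : ℕ) = i / 2 ^ b :=
  Fin.coe_divNat _

theorem reindexHalves_apply (M : Matrix (Fin (2 ^ b) × Fin 2) (Fin (2 ^ b) × Fin 2) ℂ)
    (i j : Fin (2 ^ (b + 1))) :
    reindexHalves b M i j = M (finHalvesEquiv b i) (finHalvesEquiv b j) :=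
  rfl

theorem isButterflyFactorMatrix_reindexHalves_permMatrixHom {X : Perm (Fin (2 ^ b) × Fin 2)}
    (hX : ∀ x, (X x).1 = x.1) :
    IsButterflyFactorMatrix (2 ^ (b + 1)) (2 ^ (b + 1)) (reindexHalves b (permMatrixHom X)) := by
  refine ⟨Nat.le_self_pow (by omega) 2, dvd_rfl, fun i j hij => ⟨?_, ?_⟩⟩
  · rw [Nat.div_eq_of_lt i.isLt, Nat.div_eq_of_lt j.isLt]
  · rw [reindexHalves_apply, permMatrixHom_apply_eq, ite_ne_right_iff] at hij
    have hhalf : 2 ^ (b + 1) / 2 = 2 ^ b := by rw [pow_succ, Nat.mul_div_cancel _ two_pos]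
    rw [hhalf, ← finHalvesEquiv_fst_val, ← finHalvesEquiv_fst_val, hij.1, hX]

theorem IsButterflyFactorMatrix.reindexHalves_blockDiagonal {k : ℕ}
    {M : Fin 2 → Matrix (Fin (2 ^ b)) (Fin (2 ^ b)) ℂ}
    (hM : ∀ c, IsButterflyFactorMatrix (2 ^ b) k (M c)) :
    IsButterflyFactorMatrix (2 ^ (b + 1)) k (reindexHalves b (blockDiagonal M)) := by
  obtain ⟨hk, hkb, -⟩ := hM 0
  refine ⟨hk, hkb.trans (pow_dvd_pow 2 b.le_succ), fun i j hij => ?_⟩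
  rw [reindexHalves_apply, blockDiagonal_apply, ite_ne_right_iff] at hij
  obtain ⟨hsnd, hij⟩ := hij
  have hhalf := congrArg Fin.val hsnd
  rw [finHalvesEquiv_snd_val, finHalvesEquiv_snd_val] at hhalf
  have hblock := (hM _).2.2 _ _ hij
  rw [finHalvesEquiv_fst_val, finHalvesEquiv_fst_val] at hblock
  refine ⟨Nat.div_eq_div_of_dvd_of_mod_div_eq hkb hhalf hblock.1, ?_⟩
  have hk2 : k / 2 ∣ 2 ^ b := by
    obtain ⟨t, -, rfl⟩ := (Nat.dvd_prime_pow Nat.prime_two).1 hkb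
    exact (Nat.div_dvd_of_dvd (dvd_pow_self 2 (by rintro rfl; simp at hk))).trans hkb
  rw [← Nat.mod_mod_of_dvd i hk2, ← Nat.mod_mod_of_dvd j hk2]
  exact hblock.2

theorem IsButterflyMatrix.exists_factors {M : Matrix (Fin (2 ^ b)) (Fin (2 ^ b)) ℂ}
    (hM : IsButterflyMatrix (2 ^ b) M) :
    ∃ B : ℕ → Matrix (Fin (2 ^ b)) (Fin (2 ^ b)) ℂ,
      (∀ t, 1 ≤ t → t ≤ b → IsButterflyFactorMatrix (2 ^ b) (2 ^ t) (B t)) ∧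
      M = (List.ofFn fun t : Fin b => B (b - t.val)).prod := by
  obtain ⟨b', hb', hM⟩ := hM
  obtain rfl := Nat.pow_right_injective le_rfl hb'
  exact hM

theorem IsButterflyFactorMatrix.isButterflyMatrix_mul_reindexHalves_blockDiagonal
    {F : Matrix (Fin (2 ^ (b + 1))) (Fin (2 ^ (b + 1))) ℂ}
    (hF : IsButterflyFactorMatrix (2 ^ (b + 1)) (2 ^ (b + 1)) F)
    {M : Fin 2 → Matrix (Fin (2 ^ b)) (Fin (2 ^ b)) ℂ}
    (hM : ∀ c, IsButterflyMatrix (2 ^ b) (M c)) :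
    IsButterflyMatrix (2 ^ (b + 1)) (F * reindexHalves b (blockDiagonal M)) := by
  choose B hB hMB using fun c => (hM c).exists_factors
  refine ⟨b + 1, rfl, fun t => if t = b + 1 then F else reindexHalves b (blockDiagonal (B · t)),
    fun t ht₁ ht => ?_, ?_⟩
  · dsimp only
    split_ifs with h
    · exact h ▸ hF
    · exact .reindexHalves_blockDiagonal fun c => hB c t ht₁ (by omega)
  · rw [List.ofFn_succ, List.prod_cons]
    simp only [Fin.val_zero, Nat.sub_zero, if_pos, Fin.val_succ]
    congr 1
    have hif : ∀ i : Fin b, b - ↑i ≠ b + 1 := fun i => by omega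
    simp only [Nat.add_sub_add_right, hif, if_false]
    have hprod : M = (List.ofFn fun t : Fin b => fun c => B c (b - t)).prod := funext fun c => by
      rw [hMB, Pi.list_prod_apply, List.map_ofFn]
      rfl
    rw [hprod]
    change ((reindexHalves b).toRingHom.comp (blockDiagonalRingHom _ _ ℂ)) _ = _
    rw [map_list_prod, List.map_ofFn]
    rfl

end Butterfly

theorem inBBStar_permMatrixHom (b : ℕ) (σ : Perm (Fin (2 ^ b))) :
    InBBStar (2 ^ b) (permMatrixHom σ) := by
  induction b with
  | zero =>
    have hone : IsButterflyMatrix (2 ^ 0) 1 := ⟨0, rfl, fun _ => 1, by omega, rfl⟩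
    have hσ : σ = 1 := Equiv.ext fun i => Subsingleton.elim (α := Fin 1) _ _
    exact ⟨1, 1, hone, hone, by simp [hσ]⟩
  | succ b ih =>
    set e := finHalvesEquiv b
    obtain ⟨X, Y, τ, hX, hY, hσ⟩ := exists_eq_mul_prodCongrLeft_mul (e.permCongr σ)
    choose M₁ M₂ hM₁ hM₂ hτ using fun c => ih (τ c)
    refine ⟨reindexHalves b (permMatrixHom X) * reindexHalves b (blockDiagonal M₁),
      reindexHalves b (permMatrixHom Y⁻¹) * reindexHalves b (blockDiagonal M₂),
      (isButterflyFactorMatrix_reindexHalves_permMatrixHom hX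
        ).isButterflyMatrix_mul_reindexHalves_blockDiagonal hM₁,
      (isButterflyFactorMatrix_reindexHalves_permMatrixHom (inv_apply_eq_of_apply_eq _ hY)
        ).isButterflyMatrix_mul_reindexHalves_blockDiagonal hM₂, ?_⟩
    have hperm : permMatrixHom σ = reindexHalves b (permMatrixHom (e.permCongr σ)) := by
      change _ = reindex e.symm e.symm _
      rw [reindex_permMatrixHom, ← permCongr_symm, symm_apply_apply]
    rw [hperm, hσ]
    simp only [map_mul, permMatrixHom_prodCongrLeft, hτ, blockDiagonal_mul, conjTranspose_mul,
      coe_reindexAlgEquiv, conjTranspose_reindex, blockDiagonal_conjTranspose,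
      conjTranspose_permMatrixHom, inv_inv, Matrix.mul_assoc]

/-- Every `n × n` permutation matrix (`n` a power of 2) is in `BB*`. -/
theorem permutation_in_BBStar (b n : ℕ) (hn : n = 2 ^ b)
    (P : Matrix (Fin n) (Fin n) ℂ) (hP : IsPermutationMatrix n P) :
    InBBStar n P := by
  subst hn
  obtain ⟨σ, hσ⟩ := hP
  have hPσ : P = permMatrixHom σ := by
    ext i j
    rw [hσ, permMatrixHom_apply_eq]
  exact hPσ ▸ inBBStar_permMatrixHom b σ
end
end

section
/- Let n be a power of 2 and let L be an n × n modular-balanced permutation matrix over ℂ. Then L is a butterfly matrix of size n. -/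
noncomputable section

open Matrix

/-!
Write `n = 2^b` and let `σ` be the permutation of `L`. For `t ≤ b` let
`π_t x = mixLowBits t x (σ x)` be the number whose bits from position `t` on are those of `x` and
whose low `t` bits are those of `σ x`; thus `π_0 = id` and `π_b = σ`. The `2^t` balance condition makes `π_t` injective, hence a
permutation. Passing from `π_{t-1}` to `π_t` changes only bit `t - 1`, so the permutation matrix of
`π_t ∘ π_{t-1}⁻¹` is a butterfly factor matrix with block size `2^t`, and the product of these
factors telescopes to the matrix of `σ`.
-/

open Equiv Function

lemma Matrix.permMatrixHom_apply_eq_ite {n : ℕ} (σ : Perm (Fin n)) (i j : Fin n) :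
    (permMatrixHom σ : Matrix (Fin n) (Fin n) ℂ) i j = if i = σ j then 1 else 0 := by
  simp [Equiv.symm_apply_eq]

lemma isPermutationMatrix_iff {n : ℕ} {P : Matrix (Fin n) (Fin n) ℂ} :
    IsPermutationMatrix n P ↔ ∃ σ : Perm (Fin n), P = permMatrixHom σ := by
  simp only [IsPermutationMatrix, ← Matrix.ext_iff, Matrix.permMatrixHom_apply_eq_ite]

lemma List.prod_ofFn_mul_inv_telescope {G : Type*} [Group G] (g : ℕ → G) (b : ℕ) :
    ∀ j : ℕ,
      (List.ofFn fun t : Fin j => g (b - t) * (g (b - t - 1))⁻¹).prod = g b * (g (b - j))⁻¹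
  | 0 => by simp
  | j + 1 => by
    rw [List.ofFn_succ', List.prod_concat]
    simp only [Fin.val_castSucc, Fin.val_last]
    rw [prod_ofFn_mul_inv_telescope g b j, Nat.sub_sub, ← mul_assoc, inv_mul_cancel_right]

lemma isButterflyFactorMatrix_permMatrixHom {n k : ℕ} (hk : 2 ≤ k) (hkn : k ∣ n)
    {τ : Perm (Fin n)} (hτ : ∀ x, (τ x : ℕ) / k = x / k ∧ (τ x : ℕ) % (k / 2) = x % (k / 2)) :
    IsButterflyFactorMatrix n k (permMatrixHom τ) := by
  refine ⟨hk, hkn, fun i j hij => ?_⟩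
  rw [Matrix.permMatrixHom_apply_eq_ite, ne_eq, ite_eq_right_iff, not_forall] at hij
  obtain ⟨rfl, -⟩ := hij
  exact hτ j

lemma isButterflyMatrix_of_chain {b : ℕ} {σ : Perm (Fin (2 ^ b))} (E : ℕ → Perm (Fin (2 ^ b)))
    (h_zero : E 0 = 1) (h_top : E b = σ)
    (h_step : ∀ t, 1 ≤ t → t ≤ b → ∀ x,
      (E t x : ℕ) / 2 ^ t = (E (t - 1) x : ℕ) / 2 ^ t ∧
        (E t x : ℕ) % 2 ^ (t - 1) = (E (t - 1) x : ℕ) % 2 ^ (t - 1)) :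
    IsButterflyMatrix (2 ^ b) (permMatrixHom σ) := by
  refine ⟨b, rfl, fun t => permMatrixHom (E t * (E (t - 1))⁻¹), fun t ht htb => ?_, ?_⟩
  · have hhalf : 2 ^ t / 2 = 2 ^ (t - 1) := by
      simpa using Nat.pow_div ht two_pos
    refine isButterflyFactorMatrix_permMatrixHom (Nat.le_self_pow (by omega) 2)
      (pow_dvd_pow 2 htb) fun x => ?_
    simpa [hhalf] using h_step t ht htb ((E (t - 1))⁻¹ x)
  · calc permMatrixHom σ
        = permMatrixHom (List.ofFn fun t : Fin b => E (b - t) * (E (b - t - 1))⁻¹).prod := by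
          rw [List.prod_ofFn_mul_inv_telescope, Nat.sub_self, h_zero, h_top, inv_one, mul_one]
      _ = _ := by rw [map_list_prod, List.map_ofFn]; rfl

lemma Nat.pow_mul_div_add_mod_lt {b t x y : ℕ} (hx : x < 2 ^ b) (hy : y < 2 ^ b) :
    2 ^ t * (x / 2 ^ t) + y % 2 ^ t < 2 ^ b := by
  rcases le_total t b with htb | hbt
  · have hdiv : x / 2 ^ t < 2 ^ (b - t) := by
      rwa [Nat.div_lt_iff_lt_mul (Nat.two_pow_pos t), ← Nat.pow_add, Nat.sub_add_cancel htb]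
    calc 2 ^ t * (x / 2 ^ t) + y % 2 ^ t < 2 ^ t * (x / 2 ^ t + 1) := by
          rw [Nat.mul_succ]; exact Nat.add_lt_add_left (Nat.mod_lt _ (Nat.two_pow_pos t)) _
      _ ≤ 2 ^ t * 2 ^ (b - t) := Nat.mul_le_mul_left _ hdiv
      _ = 2 ^ b := by rw [← Nat.pow_add, Nat.add_sub_cancel' htb]
  · have hle : 2 ^ b ≤ 2 ^ t := Nat.pow_le_pow_right two_pos hbt
    rwa [Nat.div_eq_of_lt (hx.trans_le hle), Nat.mul_zero, Nat.zero_add,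
      Nat.mod_eq_of_lt (hy.trans_le hle)]

def mixLowBits {b : ℕ} (t : ℕ) (x y : Fin (2 ^ b)) : Fin (2 ^ b) :=
  ⟨2 ^ t * (x / 2 ^ t) + y % 2 ^ t, Nat.pow_mul_div_add_mod_lt x.isLt y.isLt⟩

section mixLowBits

variable {b t t' : ℕ} {x y : Fin (2 ^ b)}

lemma mixLowBits_div : (mixLowBits t x y : ℕ) / 2 ^ t = x / 2 ^ t := by
  rw [mixLowBits, Nat.mul_add_div (Nat.two_pow_pos t),
    Nat.div_eq_of_lt (Nat.mod_lt _ (Nat.two_pow_pos t)), Nat.add_zero]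

lemma mixLowBits_mod : (mixLowBits t x y : ℕ) % 2 ^ t = y % 2 ^ t := by
  rw [mixLowBits, Nat.mul_add_mod, Nat.mod_mod]

lemma mixLowBits_div_of_le (h : t ≤ t') : (mixLowBits t x y : ℕ) / 2 ^ t' = x / 2 ^ t' := by
  rw [← Nat.pow_sub_mul_pow 2 h, mul_comm, ← Nat.div_div_eq_div_mul, ← Nat.div_div_eq_div_mul,
    mixLowBits_div]

lemma mixLowBits_mod_of_le (h : t ≤ t') : (mixLowBits t' x y : ℕ) % 2 ^ t = y % 2 ^ t := by
  rw [← Nat.mod_mod_of_dvd _ (pow_dvd_pow 2 h), mixLowBits_mod,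
    Nat.mod_mod_of_dvd _ (pow_dvd_pow 2 h)]

lemma mixLowBits_zero : mixLowBits 0 x y = x := by
  ext; simp [mixLowBits, Nat.mod_one]

lemma mixLowBits_of_le (h : b ≤ t) : mixLowBits t x y = y := by
  have hle : 2 ^ b ≤ 2 ^ t := Nat.pow_le_pow_right two_pos h
  ext
  simp [mixLowBits, Nat.div_eq_of_lt (x.isLt.trans_le hle), Nat.mod_eq_of_lt (y.isLt.trans_le hle)]

end mixLowBits

lemma MeetsBalance.eq_of_div_eq_of_mod_eq {n s : ℕ} {σ : Perm (Fin n)}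
    (h : MeetsBalance n s (permMatrixHom σ)) (hs : s ∣ n) {x y : Fin n}
    (hdiv : (x : ℕ) / s = y / s) (hmod : (σ x : ℕ) % s = σ y % s) : x = y := by
  have hs0 : 0 < s := Nat.pos_of_dvd_of_pos hs x.pos
  obtain ⟨a, ha⟩ := Set.ncard_eq_one.mp <|
    h _ (Nat.div_lt_div_of_lt_of_dvd hs x.isLt) _ (Nat.mod_lt (σ x) hs0)
  have h_eq_a : ∀ z : Fin n, (z : ℕ) / s = x / s → (σ z : ℕ) % s = σ x % s → z = a :=
    fun z hz hσz => (Set.ext_iff.mp ha z).mp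
      ⟨hz, σ z, by simp [Matrix.permMatrixHom_apply_eq_ite], hσz⟩
  exact (h_eq_a x rfl rfl).trans (h_eq_a y hdiv.symm hmod.symm).symm

lemma ModularBalanced.injective_mixLowBits {b : ℕ} {σ : Perm (Fin (2 ^ b))}
    (h : ModularBalanced (2 ^ b) (permMatrixHom σ)) (t : ℕ) :
    Injective fun x => mixLowBits t x (σ x) := by
  rcases Nat.eq_zero_or_pos t with rfl | ht
  · simp only [mixLowBits_zero]
    exact fun _ _ => id
  rcases le_total b t with hbt | htb
  · simpa only [mixLowBits_of_le hbt] using σ.injective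
  intro x y (hxy : mixLowBits t x (σ x) = mixLowBits t y (σ y))
  refine (h t ht (Nat.pow_le_pow_right two_pos htb)).eq_of_div_eq_of_mod_eq
    (pow_dvd_pow 2 htb) ?_ ?_
  · rw [← mixLowBits_div (y := σ x), hxy, mixLowBits_div]
  · rw [← mixLowBits_mod (x := x), hxy, mixLowBits_mod]

/-- Every modular-balanced `n × n` permutation matrix is a butterfly
matrix. -/
theorem modular_balanced_perm_is_butterfly (b n : ℕ) (hn : n = 2 ^ b)
    (L : Matrix (Fin n) (Fin n) ℂ) (hperm : IsPermutationMatrix n L)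
    (hbal : ModularBalanced n L) :
    IsButterflyMatrix n L := by
  subst hn
  obtain ⟨σ, rfl⟩ := isPermutationMatrix_iff.mp hperm
  let E t : Perm (Fin (2 ^ b)) :=
    Equiv.ofBijective _ (hbal.injective_mixLowBits t).bijective_of_finite
  refine isButterflyMatrix_of_chain E ?_ ?_ fun t _ _ x => ⟨?_, ?_⟩
  · ext x; simp [E, mixLowBits_zero]
  · ext x; simp [E, mixLowBits_of_le]
  · simp [E, mixLowBits_div, mixLowBits_div_of_le]
  · simp [E, mixLowBits_mod, mixLowBits_mod_of_le]
end
end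

section
/- Let n be a power of 2 and let P be an n × n permutation matrix over ℂ. Then P can be decomposed as P = L · R, where L is a modular-balanced permutation matrix and R is the conjugate transpose of a butterfly matrix of size n. -/
noncomputable section

open Matrix

/-! Write `P` as the permutation matrix of `σ` and look for the butterfly matrix as the permutation
matrix of `τ = T_b ⋯ T_1`, where `T_t` moves each index only inside its block of size `2^t` and
keeps it modulo `2^(t-1)`. The matrix of `σ τ` is modular-balanced as soon as `σ τ` is injective
modulo `2^t` on every block of size `2^t`, for every `t`. The factors are chosen from the top down:
if `σ T_b ⋯ T_(t+1)` is injective modulo `2^t` on a block of size `2^t`, every residue modulo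
`2^(t-1)` is attained exactly twice there, and Hall's theorem chooses in each pair
`{j, j + 2^(t-1)}` which index goes to the lower half so that both halves become injective modulo
`2^(t-1)`; this choice is `T_t`. The lower factors only move indices inside smaller blocks, so
they keep the injectivity already obtained. -/

open Equiv Finset Function

theorem exists_injective_of_card_fiber_le_two {α β : Type*} [Fintype α] [DecidableEq β]
    (φ : Fin 2 × α → β) (hφ : ∀ y, #{x | φ x = y} ≤ 2) :
    ∃ f : α → β, Injective f ∧ ∀ a, ∃ i, φ (i, a) = f a := by
  obtain ⟨f, hf, hft⟩ := (all_card_le_biUnion_card_iff_exists_injective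
      fun a => univ.image fun i => φ (i, a)).mp fun s => by
    have hmaps : ∀ x ∈ (univ ×ˢ s : Finset (Fin 2 × α)),
        φ x ∈ s.biUnion fun a => univ.image fun i => φ (i, a) := fun x hx =>
      mem_biUnion.mpr ⟨x.2, (mem_product.mp hx).2, mem_image_of_mem _ (mem_univ _)⟩
    have := card_le_mul_card_image_of_maps_to hmaps 2 fun y _ =>
      (card_le_card (filter_subset_filter _ (subset_univ _))).trans (hφ y)
    simp only [card_product, card_univ, Fintype.card_fin] at this
    omega
  exact ⟨f, hf, fun a => by simpa using hft a⟩

theorem exists_perm_fin_two_forall_injective {α β : Type*} [Fintype α] [Fintype β]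
    [DecidableEq β] (hcard : Fintype.card β ≤ Fintype.card α) (φ : Fin 2 × α → β)
    (hφ : ∀ y, #{x | φ x = y} ≤ 2) :
    ∃ g : α → Perm (Fin 2), ∀ i, Injective fun a => φ (g a i, a) := by
  classical
  obtain ⟨f, hf, hft⟩ := exists_injective_of_card_fiber_le_two φ hφ
  have hfbij : Bijective f := (Fintype.bijective_iff_injective_and_card f).mpr
    ⟨hf, le_antisymm (Fintype.card_le_of_injective f hf) hcard⟩
  choose i₀ hi₀ using hft
  have hsel : (fun a => φ (swap 0 (i₀ a) 0, a)) = f := funext fun a => by simpa using hi₀ a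
  refine ⟨fun a => swap 0 (i₀ a), Fin.forall_fin_two.mpr ⟨by simpa only [hsel] using hf, ?_⟩⟩
  -- otherwise the fiber of the common value would also contain its `f`-preimage
  intro a a' h
  by_contra hne
  obtain ⟨a'', ha''⟩ := hfbij.2 (φ (swap 0 (i₀ a) 1, a))
  have hne' : ∀ c, (swap 0 (i₀ c) 1, c) ≠ (swap 0 (i₀ a'') 0, a'') := by
    rintro c hc
    obtain ⟨h1, rfl⟩ := Prod.ext_iff.mp hc
    exact absurd ((swap 0 (i₀ c)).injective h1) (by decide)
  have hsub : ({(swap 0 (i₀ a) 1, a), (swap 0 (i₀ a') 1, a'), (swap 0 (i₀ a'') 0, a'')} :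
      Finset (Fin 2 × α)) ⊆ ({x | φ x = φ (swap 0 (i₀ a) 1, a)} : Finset _) := by
    intro x hx
    simp only [mem_insert, mem_singleton] at hx
    rcases hx with rfl | rfl | rfl
    · simp
    · simpa using h.symm
    · simpa using (hi₀ a'').trans ha''
  have := (card_le_card hsub).trans (hφ _)
  rw [card_eq_three.mpr ⟨_, _, _, fun h' => hne (Prod.ext_iff.mp h').2, hne' a, hne' a', rfl⟩]
    at this
  omega

lemma mod_two_mul_mem_of_mod_eq {v r M : ℕ} (h : v % M = r) :
    v % (2 * M) ∈ ({r, r + M} : Finset ℕ) := by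
  rw [mul_comm, Nat.mod_mul, h]
  rcases Nat.mod_two_eq_zero_or_one (v / M) with h2 | h2 <;> simp [h2]

def blockEquiv (K M : ℕ) : Fin K × Fin 2 × Fin M ≃ Fin (K * (2 * M)) :=
  (prodCongr (Equiv.refl _) finProdFinEquiv).trans finProdFinEquiv

section blockEquiv

variable {K M : ℕ} (x : Fin K × Fin 2 × Fin M)

lemma blockEquiv_val : (blockEquiv K M x : ℕ) = x.2.2 + M * (x.2.1 + 2 * x.1) := by
  simp [blockEquiv]
  ring

lemma blockEquiv_mod : (blockEquiv K M x : ℕ) % M = x.2.2 := by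
  rw [blockEquiv_val, Nat.add_mul_mod_self_left, Nat.mod_eq_of_lt x.2.2.isLt]

lemma blockEquiv_div : (blockEquiv K M x : ℕ) / M = x.2.1 + 2 * x.1 := by
  rw [blockEquiv_val, Nat.add_mul_div_left _ _ x.2.2.pos, Nat.div_eq_of_lt x.2.2.isLt, zero_add]

lemma blockEquiv_div_two_mul : (blockEquiv K M x : ℕ) / (2 * M) = x.1 := by
  have h := Nat.div_div_eq_div_mul (blockEquiv K M x : ℕ) M 2
  rw [mul_comm M 2, blockEquiv_div] at h
  omega

end blockEquiv

variable {n : ℕ}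

def ChunkInjective (s : ℕ) (f : Fin n → Fin n) : Prop :=
  ∀ i j : Fin n, (i : ℕ) / s = j / s → (f i : ℕ) % s = f j % s → i = j

def IsButterflyFactorPerm (k : ℕ) (U : Perm (Fin n)) : Prop :=
  ∀ j, (U j : ℕ) / k = j / k ∧ (U j : ℕ) % (k / 2) = j % (k / 2)

lemma chunkInjective_self (f : Perm (Fin n)) : ChunkInjective n f := fun i j _ h =>
  f.injective (Fin.ext (by simpa [Nat.mod_eq_of_lt] using h))

lemma ChunkInjective.mul {s : ℕ} {f U : Perm (Fin n)} (hf : ChunkInjective s f)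
    (hU : ∀ j, (U j : ℕ) / s = j / s) : ChunkInjective s (f * U) := fun i j hij h =>
  U.injective (hf _ _ (by rw [hU, hU, hij]) h)

lemma IsButterflyFactorPerm.div_eq {k s : ℕ} {U : Perm (Fin n)} (hU : IsButterflyFactorPerm k U)
    (hks : k ∣ s) (j : Fin n) : (U j : ℕ) / s = j / s := by
  obtain ⟨m, rfl⟩ := hks
  rw [← Nat.div_div_eq_div_mul, ← Nat.div_div_eq_div_mul, (hU j).1]

theorem exists_butterflyFactorPerm_chunkInjective {K M : ℕ} (hn : K * (2 * M) = n)
    (f : Perm (Fin n)) (hf : ChunkInjective (2 * M) f) :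
    ∃ U : Perm (Fin n), IsButterflyFactorPerm (2 * M) U ∧ ChunkInjective M (f * U) := by
  subst hn
  set e := blockEquiv K M
  set pos : Fin 2 × Fin K × Fin M → Fin (K * (2 * M)) := fun x => e (x.2.1, x.1, x.2.2)
  have hpos : Injective pos := fun x y h => by
    obtain ⟨hc, hbp⟩ := Prod.ext_iff.mp (e.injective h)
    obtain ⟨hb, hp⟩ := Prod.ext_iff.mp hbp
    exact Prod.ext hb (Prod.ext hc hp)
  set φ : Fin 2 × Fin K × Fin M → Fin K × Fin M :=
    fun x => (x.2.1, ⟨f (pos x) % M, Nat.mod_lt _ x.2.2.pos⟩)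
  have hφ : ∀ y, #{x | φ x = y} ≤ 2 := by
    rintro ⟨c, r⟩
    refine (card_le_card_of_injOn (fun x => (f (pos x) : ℕ) % (2 * M)) (t := {(r : ℕ), r + M})
      ?_ ?_).trans (card_insert_le _ _)
    · intro x hx
      simp only [coe_filter, mem_univ, true_and, Set.mem_ofPred_eq, φ, Prod.ext_iff,
        Fin.ext_iff] at hx
      exact mod_two_mul_mem_of_mod_eq hx.2
    · intro x hx y hy hxy
      simp only [coe_filter, mem_univ, true_and, Set.mem_ofPred_eq, φ, Prod.ext_iff] at hx hy
      refine hpos (hf _ _ ?_ hxy)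
      simp only [pos, e, blockEquiv_div_two_mul, hx.1, hy.1]
  obtain ⟨g, hg⟩ := exists_perm_fin_two_forall_injective le_rfl φ hφ
  let V : Perm (Fin K × Fin 2 × Fin M) :=
    { toFun x := (x.1, g (x.1, x.2.2) x.2.1, x.2.2)
      invFun x := (x.1, (g (x.1, x.2.2)).symm x.2.1, x.2.2)
      left_inv x := by simp
      right_inv x := by simp }
  refine ⟨e.permCongr V, fun j => ?_, fun i j hdiv hmod => ?_⟩
  · obtain ⟨x, rfl⟩ := e.surjective j
    simp [e, V, blockEquiv_div_two_mul, blockEquiv_mod]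
  · obtain ⟨⟨c, b, p⟩, rfl⟩ := e.surjective i
    obtain ⟨⟨c', b', p'⟩, rfl⟩ := e.surjective j
    simp only [e, blockEquiv_div] at hdiv
    obtain rfl : c = c' := Fin.ext (by omega)
    obtain rfl : b = b' := Fin.ext (by omega)
    obtain rfl : p = p' := (Prod.ext_iff.mp <| hg b (a₁ := (c, p)) (a₂ := (c, p'))
      (by simpa [φ, pos, e, V] using hmod)).2
    rfl

theorem exists_butterflyFactorPerms_chunkInjective {b : ℕ} (σ : Perm (Fin (2 ^ b))) :
    ∀ k ≤ b, ∃ T : ℕ → Perm (Fin (2 ^ b)),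
      (∀ r, b - k < r → r ≤ b → IsButterflyFactorPerm (2 ^ r) (T r)) ∧
      ∀ s, b - k ≤ s → s ≤ b →
        ChunkInjective (2 ^ s) (σ * (List.ofFn fun i : Fin k => T (b - i)).prod) := by
  intro k
  induction k with
  | zero =>
    refine fun _ => ⟨1, fun r h1 h2 => by omega, fun s h1 h2 => ?_⟩
    obtain rfl : s = b := by omega
    simpa using chunkInjective_self σ
  | succ k ih =>
    intro hk
    obtain ⟨T, hT, hinj⟩ := ih (by omega)
    set t := b - (k + 1)
    have hsize : 2 ^ k * (2 * 2 ^ t) = 2 ^ b := by rw [← pow_succ', ← pow_add]; congr 1; omega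
    obtain ⟨U, hU, hUinj⟩ := exists_butterflyFactorPerm_chunkInjective hsize _
      (by rw [← pow_succ']; exact hinj (t + 1) (by omega) (by omega))
    have hprod : (List.ofFn fun i : Fin (k + 1) => update T (t + 1) U (b - i)).prod =
        (List.ofFn fun i : Fin k => T (b - i)).prod * U := by
      rw [List.ofFn_succ_last, List.prod_append]
      simp only [Fin.val_last, show b - k = t + 1 by omega, update_self, List.prod_singleton]
      congr 3
      funext i
      exact update_of_ne (by have := i.isLt; simp only [Fin.val_castSucc]; omega) _ _
    refine ⟨update T (t + 1) U, fun r hr1 hr2 => ?_, fun s hs1 hs2 => ?_⟩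
    · rcases eq_or_ne r (t + 1) with rfl | hr
      · simpa [pow_succ'] using hU
      · rw [update_of_ne hr]
        exact hT r (by omega) hr2
    · rw [hprod, ← mul_assoc]
      rcases eq_or_lt_of_le hs1 with rfl | hs
      · exact hUinj
      · exact (hinj s (by omega) hs2).mul
          (hU.div_eq (by rw [← pow_succ']; exact pow_dvd_pow 2 hs))

lemma permMatrixHom_apply_apply (σ : Perm (Fin n)) (i j : Fin n) :
    permMatrixHom σ i j = if i = σ j then (1 : ℂ) else 0 := by
  simp [PEquiv.toMatrix_apply, Equiv.eq_symm_apply, eq_comm]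

lemma conjTranspose_permMatrixHom (σ : Perm (Fin n)) :
    (permMatrixHom σ : Matrix (Fin n) (Fin n) ℂ)ᴴ = permMatrixHom σ⁻¹ := by
  simp

lemma isPermutationMatrix_permMatrixHom (σ : Perm (Fin n)) :
    IsPermutationMatrix n (permMatrixHom σ) :=
  ⟨σ, permMatrixHom_apply_apply σ⟩

lemma IsPermutationMatrix.exists_eq_permMatrixHom {P : Matrix (Fin n) (Fin n) ℂ}
    (hP : IsPermutationMatrix n P) : ∃ σ, P = permMatrixHom σ := by
  obtain ⟨σ, hσ⟩ := hP
  exact ⟨σ, Matrix.ext fun i j => by rw [hσ, permMatrixHom_apply_apply]⟩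

lemma IsButterflyFactorPerm.isButterflyFactorMatrix {k : ℕ} {U : Perm (Fin n)}
    (hU : IsButterflyFactorPerm k U) (hk : 2 ≤ k) (hkn : k ∣ n) :
    IsButterflyFactorMatrix n k (permMatrixHom U) := by
  refine ⟨hk, hkn, fun i j hij => ?_⟩
  rw [permMatrixHom_apply_apply, ne_eq, ite_eq_right_iff, Classical.not_imp] at hij
  exact hij.1 ▸ hU j

lemma isButterflyMatrix_permMatrixHom {b : ℕ} (T : ℕ → Perm (Fin (2 ^ b)))
    (hT : ∀ t, 1 ≤ t → t ≤ b → IsButterflyFactorPerm (2 ^ t) (T t)) :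
    IsButterflyMatrix (2 ^ b) (permMatrixHom (List.ofFn fun i : Fin b => T (b - i)).prod) := by
  refine ⟨b, rfl, fun t => permMatrixHom (T t), fun t h1 h2 => ?_, ?_⟩
  · exact (hT t h1 h2).isButterflyFactorMatrix (by simpa using Nat.pow_le_pow_right two_pos h1)
      (pow_dvd_pow 2 h2)
  · rw [map_list_prod, List.map_ofFn]
    rfl

lemma meetsBalance_permMatrixHom {s : ℕ} {f : Perm (Fin n)}
    (hf : ChunkInjective s f) : MeetsBalance n s (permMatrixHom f) := by
  intro c hc m hm
  simp only [permMatrixHom_apply_apply, ne_eq, ite_eq_right_iff, one_ne_zero, imp_false,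
    not_not, exists_eq_left]
  have hdiv : ∀ r : Fin s, (s * c + r) / s = c := fun r => by
    rw [Nat.mul_add_div r.pos, Nat.div_eq_of_lt r.isLt, add_zero]
  let elt : Fin s → Fin n := fun r =>
    ⟨s * c + r, Nat.lt_of_div_lt_div ((hdiv r).trans_lt hc)⟩
  have helt : Injective fun r => (⟨f (elt r) % s, Nat.mod_lt _ (by omega)⟩ : Fin s) :=
    fun r r' h => Fin.ext <| by
      simpa [elt] using hf _ _ ((hdiv r).trans (hdiv r').symm) (Fin.ext_iff.mp h)
  obtain ⟨r, hr⟩ := Finite.injective_iff_surjective.mp helt ⟨m, hm⟩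
  refine Set.ncard_eq_one.mpr ⟨elt r, Set.eq_singleton_iff_unique_mem.mpr ⟨⟨hdiv r, ?_⟩, ?_⟩⟩
  · simpa using Fin.ext_iff.mp hr
  · rintro j ⟨hj, hjm⟩
    exact hf _ _ (hj.trans (hdiv r).symm) (hjm.trans (Fin.ext_iff.mp hr).symm)

lemma modularBalanced_permMatrixHom {b : ℕ} {f : Perm (Fin (2 ^ b))}
    (hf : ∀ t ≤ b, ChunkInjective (2 ^ t) f) : ModularBalanced (2 ^ b) (permMatrixHom f) :=
  fun t _ ht => meetsBalance_permMatrixHom (hf t ((Nat.pow_le_pow_iff_right one_lt_two).mp ht))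

/-- Every `n × n` permutation matrix `P` decomposes as `P = L · R` with
`L` a modular-balanced permutation matrix and `R` the conjugate transpose of a butterfly
matrix. -/
theorem perm_decomposes_modbal_times_Bstar (b n : ℕ) (hn : n = 2 ^ b)
    (P : Matrix (Fin n) (Fin n) ℂ) (hP : IsPermutationMatrix n P) :
    ∃ L R : Matrix (Fin n) (Fin n) ℂ,
      IsPermutationMatrix n L ∧ ModularBalanced n L ∧
      (∃ B : Matrix (Fin n) (Fin n) ℂ, IsButterflyMatrix n B ∧ R = Bᴴ) ∧
      P = L * R := by
  subst hn
  obtain ⟨σ, rfl⟩ := hP.exists_eq_permMatrixHom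
  obtain ⟨T, hT, hσT⟩ := exists_butterflyFactorPerms_chunkInjective σ b le_rfl
  set τ := (List.ofFn fun i : Fin b => T (b - i)).prod
  refine ⟨permMatrixHom (σ * τ), (permMatrixHom τ)ᴴ, isPermutationMatrix_permMatrixHom _,
    modularBalanced_permMatrixHom fun t ht => hσT t (by omega) ht,
    ⟨_, isButterflyMatrix_permMatrixHom T fun t ht hb => hT t (by omega) hb, rfl⟩, ?_⟩
  rw [conjTranspose_permMatrixHom, ← map_mul, mul_inv_cancel_right]
end
end

section
/- Let n be a power of 2 and let P be an n × n permutation matrix over ℂ. Then P ∈ B*B; that is, there exist butterfly matrices M1, M2 of size n such that P = M1* · M2. -/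
noncomputable section

open Matrix

/-!
Permutations of `Fin n` are encoded as permutations of `ℕ` fixing every `x ≥ n`; such a
permutation has a butterfly factor of block size `k` as matrix when it preserves `x / k` and
`x % (k / 2)`. The factorization is the Beneš network. Hall's theorem, applied to the 2-regular
bipartite multigraph joining each pair `{2p, 2p+1}` to the pairs containing its images, factors
`σ` as `π * interleave (τ₀, τ₁) * ρ`, where `π, ρ` only switch within pairs (block size 2) and
`τ₀, τ₁` are half-size permutations acting on the even and on the odd positions. Interleaving
turns butterfly factors of block size `k` into ones of block size `2k`, so recursion writes
`σ = (δ_b ⋯ δ_1)⁻¹ (ε_b ⋯ ε_1)` with `δ_t, ε_t` butterfly factors of block size `2^t`, and the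
inverse of a permutation matrix is its conjugate transpose.
-/

open Equiv Set

section Perms

variable {n m k : ℕ}

lemma mem_fixingSubgroup_Ici {μ : Perm ℕ} :
    μ ∈ fixingSubgroup (Perm ℕ) (Ici n) ↔ ∀ x, n ≤ x → μ x = x := by
  simp [mem_fixingSubgroup_iff, Perm.smul_def]

lemma lt_of_mem_fixingSubgroup_Ici {μ : Perm ℕ} (hμ : μ ∈ fixingSubgroup (Perm ℕ) (Ici n))
    {x : ℕ} (hx : x < n) : μ x < n := by
  by_contra! h
  have := μ.injective (mem_fixingSubgroup_Ici.mp hμ _ h)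
  omega

lemma extendDomain_mem_fixingSubgroup_Ici (σ : Perm (Fin n)) :
    σ.extendDomain Fin.equivSubtype ∈ fixingSubgroup (Perm ℕ) (Ici n) :=
  mem_fixingSubgroup_Ici.mpr fun _ hx => σ.extendDomain_apply_not_subtype _ (by omega)

lemma extendDomain_apply_lt (σ : Perm (Fin n)) {x : ℕ} (hx : x < n) :
    σ.extendDomain Fin.equivSubtype x = σ ⟨x, hx⟩ := by
  rw [Perm.extendDomain_apply_subtype σ Fin.equivSubtype (b := x) hx]
  rfl

lemma exists_mem_fixingSubgroup_eqOn {g : ℕ → ℕ} (hmaps : MapsTo g (Iio m) (Iio m))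
    (hinj : InjOn g (Iio m)) :
    ∃ τ ∈ fixingSubgroup (Perm ℕ) (Ici m), EqOn τ g (Iio m) := by
  let g' : Fin m → Fin m := fun p => ⟨g p, hmaps p.isLt⟩
  have hg' : g'.Injective := fun p q h => Fin.ext (hinj p.isLt q.isLt (congrArg Fin.val h))
  refine ⟨Perm.extendDomain (Equiv.ofBijective g' (Finite.injective_iff_bijective.mp hg'))
    Fin.equivSubtype, extendDomain_mem_fixingSubgroup_Ici _, fun _ hx => extendDomain_apply_lt _ hx⟩

def fiberwisePerms {α β : Type*} (f : α → β) : Subgroup (Perm α) where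
  carrier := {μ | ∀ x, f (μ x) = f x}
  mul_mem' hμ hν x := (hμ _).trans (hν x)
  one_mem' _ := rfl
  inv_mem' {μ} hμ x := by simpa using (hμ (μ⁻¹ x)).symm

def butterflyPerms (n k : ℕ) : Subgroup (Perm ℕ) :=
  fixingSubgroup (Perm ℕ) (Ici n) ⊓ (fiberwisePerms (· / k) ⊓ fiberwisePerms (· % (k / 2)))

lemma mem_butterflyPerms {μ : Perm ℕ} : μ ∈ butterflyPerms n k ↔
    μ ∈ fixingSubgroup (Perm ℕ) (Ici n) ∧ (∀ x, μ x / k = x / k) ∧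
      ∀ x, μ x % (k / 2) = x % (k / 2) :=
  Iff.rfl

lemma mem_butterflyPerms_two {μ : Perm ℕ} : μ ∈ butterflyPerms n 2 ↔
    μ ∈ fixingSubgroup (Perm ℕ) (Ici n) ∧ ∀ x, μ x / 2 = x / 2 := by
  simp [mem_butterflyPerms, Nat.mod_one]

end Perms

section Interleave

variable {m k : ℕ}

def interleave : Perm ℕ × Perm ℕ →* Perm ℕ :=
  (natSumNatEquivNat.permCongrHom : Perm (ℕ ⊕ ℕ) ≃* Perm ℕ).toMonoidHom.comp
    (Perm.sumCongrHom ℕ ℕ)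

lemma interleave_apply_two_mul (f g : Perm ℕ) (p : ℕ) : interleave (f, g) (2 * p) = 2 * f p := by
  have : 2 * p = natSumNatEquivNat (.inl p) := by simp [natSumNatEquivNat_apply]
  rw [this]
  simp [interleave, permCongrHom, natSumNatEquivNat_apply]

lemma interleave_apply_two_mul_add_one (f g : Perm ℕ) (p : ℕ) :
    interleave (f, g) (2 * p + 1) = 2 * g p + 1 := by
  have : 2 * p + 1 = natSumNatEquivNat (.inr p) := by simp [natSumNatEquivNat_apply]
  rw [this]
  simp [interleave, permCongrHom, natSumNatEquivNat_apply]

lemma interleave_mem_fixingSubgroup_Ici {f g : Perm ℕ}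
    (hf : f ∈ fixingSubgroup (Perm ℕ) (Ici m)) (hg : g ∈ fixingSubgroup (Perm ℕ) (Ici m)) :
    interleave (f, g) ∈ fixingSubgroup (Perm ℕ) (Ici (2 * m)) := by
  rw [mem_fixingSubgroup_Ici] at hf hg ⊢
  intro x hx
  obtain ⟨p, rfl | rfl⟩ := Nat.even_or_odd' x
  · rw [interleave_apply_two_mul, hf p (by omega)]
  · rw [interleave_apply_two_mul_add_one, hg p (by omega)]

lemma interleave_mem_fiberwisePerms {β γ : Type*} {φ : ℕ → β} {ψ : ℕ → γ}
    (hψ : ∀ a b, φ a = φ b → ψ (2 * a) = ψ (2 * b) ∧ ψ (2 * a + 1) = ψ (2 * b + 1))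
    {f g : Perm ℕ} (hf : f ∈ fiberwisePerms φ) (hg : g ∈ fiberwisePerms φ) :
    interleave (f, g) ∈ fiberwisePerms ψ := by
  intro x
  obtain ⟨p, rfl | rfl⟩ := Nat.even_or_odd' x
  · rw [interleave_apply_two_mul]
    exact (hψ _ _ (hf p)).1
  · rw [interleave_apply_two_mul_add_one]
    exact (hψ _ _ (hg p)).2

lemma interleave_mem_butterflyPerms (hk : Even k) {f g : Perm ℕ}
    (hf : f ∈ butterflyPerms m k) (hg : g ∈ butterflyPerms m k) :
    interleave (f, g) ∈ butterflyPerms (2 * m) (2 * k) := by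
  obtain ⟨hf₁, hf₂, hf₃⟩ := hf
  obtain ⟨hg₁, hg₂, hg₃⟩ := hg
  refine ⟨interleave_mem_fixingSubgroup_Ici hf₁ hg₁,
    interleave_mem_fiberwisePerms (fun a b hab => ?_) hf₂ hg₂,
    interleave_mem_fiberwisePerms (fun a b hab => ?_) hf₃ hg₃⟩
  · have div_odd (c : ℕ) : (2 * c + 1) / (2 * k) = c / k := by
      rw [← Nat.div_div_eq_div_mul]
      congr 1
      omega
    simp only [Nat.mul_div_mul_left _ _ two_pos, div_odd]
    exact ⟨hab, hab⟩
  · have hmod : 2 * a ≡ 2 * b [MOD 2 * (k / 2)] := Nat.ModEq.mul_left' 2 hab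
    rw [Nat.two_mul_div_two_of_even hk] at hmod
    simp only [Nat.mul_div_cancel_left k two_pos]
    exact ⟨hmod, hmod.add_right 1⟩

end Interleave

section Routing

variable {m : ℕ}

/-- Swaps `2 * p` and `2 * p + 1` for every `p ∈ s`. -/
def pairSwap (s : Finset ℕ) : Perm ℕ :=
  Function.Involutive.toPerm (fun x => if x / 2 ∈ s then 2 * (x / 2) + 1 - x % 2 else x) <| by
    intro x
    by_cases hx : x / 2 ∈ s
    · have : (2 * (x / 2) + 1 - x % 2) / 2 = x / 2 := by omega
      simp only [hx, if_true, this]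
      omega
    · simp only [hx, if_false]

lemma pairSwap_apply (s : Finset ℕ) (x : ℕ) :
    pairSwap s x = if x / 2 ∈ s then 2 * (x / 2) + 1 - x % 2 else x :=
  rfl

lemma pairSwap_apply_two_mul (s : Finset ℕ) (p : ℕ) :
    pairSwap s (2 * p) = if p ∈ s then 2 * p + 1 else 2 * p := by
  simp [pairSwap_apply]

lemma pairSwap_mem_butterflyPerms {s : Finset ℕ} (hs : s ⊆ Finset.range m) :
    pairSwap s ∈ butterflyPerms (2 * m) 2 := by
  refine mem_butterflyPerms_two.mpr ⟨mem_fixingSubgroup_Ici.mpr fun x hx => ?_, fun x => ?_⟩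
  · have : x / 2 ∉ s := fun h => by have := Finset.mem_range.mp (hs h); omega
    simp [pairSwap_apply, this]
  · rw [pairSwap_apply]
    split_ifs <;> omega

/-- Hall's marriage theorem for the 2-regular bipartite multigraph joining the pair
`{2p, 2p+1}` to the pairs containing its images under `σ`. -/
lemma exists_injective_pair_representative (σ : Perm ℕ) (m : ℕ) :
    ∃ f : Fin m → ℕ, f.Injective ∧ ∀ p : Fin m, f p = σ (2 * p) / 2 ∨ f p = σ (2 * p + 1) / 2 := by
  classical
  let t : Fin m → Finset ℕ := fun p => {σ (2 * p) / 2, σ (2 * p + 1) / 2}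
  suffices ∀ s : Finset (Fin m), s.card ≤ (s.biUnion t).card by
    simpa [t] using (Finset.all_card_le_biUnion_card_iff_exists_injective t).mp this
  intro s
  let ψ : Fin m × Fin 2 → ℕ := fun pe => σ (2 * pe.1 + pe.2) / 2
  have hfibre : ∀ q ∈ (s ×ˢ Finset.univ).image ψ,
      ((s ×ˢ Finset.univ).filter (ψ · = q)).card ≤ 2 := by
    intro q _
    calc _ ≤ ({2 * q, 2 * q + 1} : Finset ℕ).card := by
          refine Finset.card_le_card_of_injOn (fun pe => σ (2 * pe.1 + pe.2)) ?_ ?_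
          · intro pe hpe
            simp only [Finset.coe_filter, Set.mem_ofPred_eq, ψ] at hpe
            simp only [Finset.coe_insert, Finset.coe_singleton, Set.mem_insert_iff,
              Set.mem_singleton_iff]
            omega
          · intro pe _ pe' _ h
            have := σ.injective h
            have := pe.2.isLt
            have := pe'.2.isLt
            ext <;> omega
      _ ≤ 2 := Finset.card_le_two
  have himage : (s ×ˢ Finset.univ).image ψ ⊆ s.biUnion t := by
    intro q hq
    obtain ⟨⟨p, e⟩, hpe, rfl⟩ := Finset.mem_image.mp hq
    refine Finset.mem_biUnion.mpr ⟨p, (Finset.mem_product.mp hpe).1, ?_⟩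
    fin_cases e <;> simp [t, ψ]
  suffices 2 * s.card ≤ 2 * (s.biUnion t).card by omega
  calc 2 * s.card = (s ×ˢ Finset.univ).card := by simp [mul_comm]
    _ ≤ 2 * ((s ×ˢ Finset.univ).image ψ).card := Finset.card_le_mul_card_image _ 2 hfibre
    _ ≤ 2 * (s.biUnion t).card := Nat.mul_le_mul_left 2 (Finset.card_le_card himage)

lemma exists_pairSwap_injOn (σ : Perm ℕ) (m : ℕ) :
    ∃ s ⊆ Finset.range m, InjOn (fun p => σ (pairSwap s (2 * p)) / 2) (Iio m) := by
  classical
  obtain ⟨f, hf, hfσ⟩ := exists_injective_pair_representative σ m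
  let s := (Finset.univ.filter fun p : Fin m => f p ≠ σ (2 * p) / 2).image Fin.val
  have hrep : ∀ p : Fin m, σ (pairSwap s (2 * p)) / 2 = f p := by
    intro p
    rw [pairSwap_apply_two_mul]
    have : (p : ℕ) ∈ s ↔ f p ≠ σ (2 * p) / 2 := by simp [s, Fin.val_inj]
    split_ifs with h
    · exact ((hfσ p).resolve_left (this.mp h)).symm
    · exact (not_ne_iff.mp (mt this.mpr h)).symm
  refine ⟨s, fun x hx => ?_, fun p hp q hq h => ?_⟩
  · obtain ⟨p, -, rfl⟩ := Finset.mem_image.mp hx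
    exact Finset.mem_range.mpr p.isLt
  · exact congrArg Fin.val (hf (((hrep ⟨p, hp⟩).symm.trans h).trans (hrep ⟨q, hq⟩)))

lemma mapsTo_div_two_of_mem_fixingSubgroup_Ici {φ : Perm ℕ}
    (hφ : φ ∈ fixingSubgroup (Perm ℕ) (Ici (2 * m))) {e : ℕ} (he : e < 2) :
    MapsTo (fun p => φ (2 * p + e) / 2) (Iio m) (Iio m) := fun p hp => by
  have := lt_of_mem_fixingSubgroup_Ici hφ (show 2 * p + e < 2 * m by rw [mem_Iio] at hp; omega)
  simp only [mem_Iio]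
  omega

lemma injOn_odd_of_injOn_even {φ : Perm ℕ} (hφ : φ ∈ fixingSubgroup (Perm ℕ) (Ici (2 * m)))
    (heven : InjOn (fun p => φ (2 * p) / 2) (Iio m)) :
    InjOn (fun p => φ (2 * p + 1) / 2) (Iio m) := by
  have hsurj := ((finite_Iio m).injOn_iff_bijOn_of_mapsTo
    (mapsTo_div_two_of_mem_fixingSubgroup_Ici hφ two_pos)).mp heven |>.surjOn
  intro p hp p' _ h
  by_contra hne
  obtain ⟨r, -, hr⟩ := hsurj (mapsTo_div_two_of_mem_fixingSubgroup_Ici hφ one_lt_two hp)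
  simp only at h hr
  -- Otherwise the pair `{2q, 2q+1}` would contain the three distinct values
  -- `φ (2r)`, `φ (2p+1)` and `φ (2p'+1)`.
  have := φ.injective.ne (show 2 * r + 0 ≠ 2 * p + 1 by omega)
  have := φ.injective.ne (show 2 * r + 0 ≠ 2 * p' + 1 by omega)
  have := φ.injective.ne (show 2 * p + 1 ≠ 2 * p' + 1 by omega)
  omega

lemma exists_eq_mul_interleave {φ : Perm ℕ} (hφ : φ ∈ fixingSubgroup (Perm ℕ) (Ici (2 * m)))
    (heven : InjOn (fun p => φ (2 * p) / 2) (Iio m)) :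
    ∃ π ∈ butterflyPerms (2 * m) 2, ∃ τ₀ ∈ fixingSubgroup (Perm ℕ) (Ici m),
      ∃ τ₁ ∈ fixingSubgroup (Perm ℕ) (Ici m), φ = π * interleave (τ₀, τ₁) := by
  obtain ⟨τ₀, hτ₀, he⟩ :=
    exists_mem_fixingSubgroup_eqOn (mapsTo_div_two_of_mem_fixingSubgroup_Ici hφ two_pos) heven
  obtain ⟨τ₁, hτ₁, ho⟩ := exists_mem_fixingSubgroup_eqOn
    (mapsTo_div_two_of_mem_fixingSubgroup_Ici hφ one_lt_two) (injOn_odd_of_injOn_even hφ heven)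
  set τ := interleave (τ₀, τ₁)
  have hτ : τ ∈ fixingSubgroup (Perm ℕ) (Ici (2 * m)) := interleave_mem_fixingSubgroup_Ici hτ₀ hτ₁
  have hτφ (y : ℕ) : τ y / 2 = φ y / 2 := by
    rcases lt_or_ge y (2 * m) with hy | hy
    · obtain ⟨p, rfl | rfl⟩ := Nat.even_or_odd' y
      · rw [interleave_apply_two_mul, he (mem_Iio.mpr (by omega))]
        simp
      · rw [interleave_apply_two_mul_add_one, ho (mem_Iio.mpr (by omega))]
        dsimp only
        omega
    · rw [mem_fixingSubgroup_Ici.mp hτ y hy, mem_fixingSubgroup_Ici.mp hφ y hy]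
  refine ⟨φ * τ⁻¹, mem_butterflyPerms_two.mpr ⟨mul_mem hφ (inv_mem hτ), fun x => ?_⟩,
    τ₀, hτ₀, τ₁, hτ₁, (inv_mul_cancel_right φ τ).symm⟩
  rw [Perm.mul_apply, ← hτφ]
  simp

lemma exists_eq_mul_interleave_mul {σ : Perm ℕ}
    (hσ : σ ∈ fixingSubgroup (Perm ℕ) (Ici (2 * m))) :
    ∃ π ∈ butterflyPerms (2 * m) 2, ∃ ρ ∈ butterflyPerms (2 * m) 2,
      ∃ τ₀ ∈ fixingSubgroup (Perm ℕ) (Ici m), ∃ τ₁ ∈ fixingSubgroup (Perm ℕ) (Ici m),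
        σ = π * interleave (τ₀, τ₁) * ρ := by
  obtain ⟨s, hs, hinj⟩ := exists_pairSwap_injOn σ m
  have hρ := pairSwap_mem_butterflyPerms hs
  obtain ⟨π, hπ, τ₀, hτ₀, τ₁, hτ₁, h⟩ :=
    exists_eq_mul_interleave (mul_mem hσ (mem_butterflyPerms_two.mp hρ).1) hinj
  exact ⟨π, hπ, (pairSwap s)⁻¹, inv_mem hρ, τ₀, hτ₀, τ₁, hτ₁, by rw [← h]; group⟩

end Routing

section Stages

/-- `stageProd b γ = γ b * γ (b - 1) * ⋯ * γ 1`. -/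
def stageProd {M : Type*} [Monoid M] (b : ℕ) (γ : ℕ → M) : M :=
  (List.ofFn fun t : Fin b => γ (b - t)).prod

variable {M : Type*} [Monoid M]

@[simp]
lemma stageProd_zero (γ : ℕ → M) : stageProd 0 γ = 1 :=
  rfl

lemma stageProd_succ (b : ℕ) (γ : ℕ → M) :
    stageProd (b + 1) γ = stageProd b (fun t => γ (t + 1)) * γ 1 := by
  simp only [stageProd, List.ofFn_succ', List.concat_eq_append, List.prod_append,
    List.prod_singleton, Fin.val_last, Fin.val_castSucc, Nat.add_sub_cancel_left]
  congr 3
  funext t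
  rw [Nat.sub_add_comm t.isLt.le]

lemma stageProd_congr {b : ℕ} {γ γ' : ℕ → M} (h : ∀ t, 1 ≤ t → t ≤ b → γ t = γ' t) :
    stageProd b γ = stageProd b γ' := by
  unfold stageProd
  congr 2
  funext t
  exact h _ (by omega) (by omega)

lemma map_stageProd {N F : Type*} [Monoid N] [FunLike F M N] [MonoidHomClass F M N] (f : F)
    (b : ℕ) (γ : ℕ → M) : f (stageProd b γ) = stageProd b (fun t => f (γ t)) := by
  simp [stageProd, map_list_prod, List.map_ofFn, Function.comp_def]

lemma stageProd_mem {S : Type*} [SetLike S M] [SubmonoidClass S M] {H : S} {b : ℕ}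
    {γ : ℕ → M} (h : ∀ t, 1 ≤ t → t ≤ b → γ t ∈ H) : stageProd b γ ∈ H :=
  list_prod_mem <| by
    simp only [List.mem_ofFn, forall_exists_index]
    rintro _ t rfl
    exact h _ (by omega) (by omega)

lemma stageProd_prodMk {N : Type*} [Monoid N] (b : ℕ) (γ : ℕ → M) (γ' : ℕ → N) :
    stageProd b (fun t => (γ t, γ' t)) = (stageProd b γ, stageProd b γ') :=
  Prod.ext (map_stageProd (MonoidHom.fst M N) b _) (map_stageProd (MonoidHom.snd M N) b _)

end Stages

section Decomposition

def interleaveStages (α : Perm ℕ) (γ₀ γ₁ : ℕ → Perm ℕ) (t : ℕ) : Perm ℕ :=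
  if t = 1 then α else interleave (γ₀ (t - 1), γ₁ (t - 1))

lemma stageProd_interleaveStages (b : ℕ) (α : Perm ℕ) (γ₀ γ₁ : ℕ → Perm ℕ) :
    stageProd (b + 1) (interleaveStages α γ₀ γ₁) =
      interleave (stageProd b γ₀, stageProd b γ₁) * α := by
  rw [stageProd_succ, ← stageProd_prodMk, map_stageProd]
  congr 1
  exact stageProd_congr fun t ht _ => if_neg (by omega)

lemma interleaveStages_mem_butterflyPerms {m b : ℕ} {α : Perm ℕ} {γ₀ γ₁ : ℕ → Perm ℕ}
    (hα : α ∈ butterflyPerms (2 * m) 2)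
    (hγ₀ : ∀ t, 1 ≤ t → t ≤ b → γ₀ t ∈ butterflyPerms m (2 ^ t))
    (hγ₁ : ∀ t, 1 ≤ t → t ≤ b → γ₁ t ∈ butterflyPerms m (2 ^ t))
    {t : ℕ} (ht₁ : 1 ≤ t) (ht₂ : t ≤ b + 1) :
    interleaveStages α γ₀ γ₁ t ∈ butterflyPerms (2 * m) (2 ^ t) := by
  unfold interleaveStages
  split_ifs with ht
  · simpa [ht] using hα
  · obtain ⟨s, rfl⟩ : ∃ s, t = s + 1 := ⟨t - 1, by omega⟩
    rw [pow_succ', Nat.add_sub_cancel]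
    exact interleave_mem_butterflyPerms (Nat.even_pow.mpr ⟨even_two, by omega⟩)
      (hγ₀ _ (by omega) (by omega)) (hγ₁ _ (by omega) (by omega))

theorem exists_butterflyPerms_decomposition (b : ℕ) {σ : Perm ℕ}
    (hσ : σ ∈ fixingSubgroup (Perm ℕ) (Ici (2 ^ b))) :
    ∃ δ ε : ℕ → Perm ℕ,
      (∀ t, 1 ≤ t → t ≤ b → δ t ∈ butterflyPerms (2 ^ b) (2 ^ t) ∧
        ε t ∈ butterflyPerms (2 ^ b) (2 ^ t)) ∧
      σ = (stageProd b δ)⁻¹ * stageProd b ε := by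
  induction b generalizing σ with
  | zero =>
    refine ⟨1, 1, fun t h₁ h₂ => absurd h₂ (by omega), ?_⟩
    ext x
    rcases Nat.eq_zero_or_pos x with rfl | hx
    · simpa using lt_of_mem_fixingSubgroup_Ici hσ zero_lt_one
    · simpa using mem_fixingSubgroup_Ici.mp hσ x hx
  | succ b ih =>
    rw [pow_succ'] at hσ ⊢
    obtain ⟨π, hπ, ρ, hρ, τ₀, hτ₀, τ₁, hτ₁, rfl⟩ := exists_eq_mul_interleave_mul hσ
    obtain ⟨δ₀, ε₀, h₀, rfl⟩ := ih hτ₀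
    obtain ⟨δ₁, ε₁, h₁, rfl⟩ := ih hτ₁
    refine ⟨interleaveStages π⁻¹ δ₀ δ₁, interleaveStages ρ ε₀ ε₁, fun t ht₁ ht₂ =>
      ⟨interleaveStages_mem_butterflyPerms (inv_mem hπ) (fun t h h' => (h₀ t h h').1)
          (fun t h h' => (h₁ t h h').1) ht₁ ht₂,
        interleaveStages_mem_butterflyPerms hρ (fun t h h' => (h₀ t h h').2)
          (fun t h h' => (h₁ t h h').2) ht₁ ht₂⟩, ?_⟩
    rw [stageProd_interleaveStages, stageProd_interleaveStages, ← Prod.mk_mul_mk, ← Prod.inv_mk,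
      map_mul, map_inv]
    group

end Decomposition

section Matrices

variable (R : Type*) (n : ℕ)

/-- Column `j` has its `1` in row `μ j`: the transpose of Mathlib's `Equiv.Perm.permMatrix`. -/
def truncPermMatrix [Zero R] [One R] (μ : Perm ℕ) : Matrix (Fin n) (Fin n) R :=
  of fun i j => if (i : ℕ) = μ j then 1 else 0

variable {R n}

lemma truncPermMatrix_apply [Zero R] [One R] (μ : Perm ℕ) (i j : Fin n) :
    truncPermMatrix R n μ i j = if (i : ℕ) = μ j then 1 else 0 :=
  rfl

lemma truncPermMatrix_mul [NonAssocSemiring R] (μ : Perm ℕ) {ν : Perm ℕ}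
    (hν : ν ∈ fixingSubgroup (Perm ℕ) (Ici n)) :
    truncPermMatrix R n (μ * ν) = truncPermMatrix R n μ * truncPermMatrix R n ν := by
  ext i j
  have hj : (ν j : ℕ) < n := lt_of_mem_fixingSubgroup_Ici hν j.isLt
  have hcol (k : Fin n) : (k : ℕ) = ν j ↔ k = ⟨ν j, hj⟩ := by simp [Fin.ext_iff]
  simp only [truncPermMatrix_apply, mul_apply, hcol, mul_ite, mul_one, mul_zero,
    Finset.sum_ite_eq', Finset.mem_univ, if_true, Perm.mul_apply]
  congr

lemma truncPermMatrix_inv [NonAssocSemiring R] [StarRing R] (μ : Perm ℕ) :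
    truncPermMatrix R n μ⁻¹ = (truncPermMatrix R n μ)ᴴ := by
  ext i j
  simp only [truncPermMatrix_apply, conjTranspose_apply, Perm.inv_def, eq_symm_apply,
    eq_comm (a := (j : ℕ))]
  split_ifs <;> simp

lemma truncPermMatrix_stageProd [Semiring R] {b : ℕ} {γ : ℕ → Perm ℕ}
    (hγ : ∀ t, 1 ≤ t → t ≤ b → γ t ∈ fixingSubgroup (Perm ℕ) (Ici n)) :
    truncPermMatrix R n (stageProd b γ) = stageProd b fun t => truncPermMatrix R n (γ t) := by
  induction b generalizing γ with
  | zero => ext i j; simp [truncPermMatrix_apply, one_apply, Fin.val_inj]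
  | succ b ih =>
    rw [stageProd_succ, stageProd_succ, truncPermMatrix_mul _ (hγ 1 le_rfl (by omega)),
      ih fun t h₁ h₂ => hγ (t + 1) (by omega) (by omega)]

lemma isButterflyFactorMatrix_truncPermMatrix {k : ℕ} (hk : 2 ≤ k) (hkn : k ∣ n)
    {μ : Perm ℕ} (hμ : μ ∈ butterflyPerms n k) :
    IsButterflyFactorMatrix n k (truncPermMatrix ℂ n μ) := by
  refine ⟨hk, hkn, fun i j hij => ?_⟩
  have hi : (i : ℕ) = μ j := by
    by_contra h
    simp [truncPermMatrix_apply, h] at hij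
  obtain ⟨-, hdiv, hmod⟩ := mem_butterflyPerms.mp hμ
  exact hi ▸ ⟨hdiv j, hmod j⟩

lemma isButterflyMatrix_truncPermMatrix_stageProd {b : ℕ} {γ : ℕ → Perm ℕ}
    (hγ : ∀ t, 1 ≤ t → t ≤ b → γ t ∈ butterflyPerms (2 ^ b) (2 ^ t)) :
    IsButterflyMatrix (2 ^ b) (truncPermMatrix ℂ (2 ^ b) (stageProd b γ)) :=
  ⟨b, rfl, fun t => truncPermMatrix ℂ (2 ^ b) (γ t),
    fun t h₁ h₂ => isButterflyFactorMatrix_truncPermMatrix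
      (by simpa using Nat.pow_le_pow_right two_pos h₁) (pow_dvd_pow 2 h₂) (hγ t h₁ h₂),
    truncPermMatrix_stageProd fun t h₁ h₂ => (mem_butterflyPerms.mp (hγ t h₁ h₂)).1⟩

lemma IsPermutationMatrix.exists_eq_truncPermMatrix {P : Matrix (Fin n) (Fin n) ℂ}
    (hP : IsPermutationMatrix n P) :
    ∃ μ ∈ fixingSubgroup (Perm ℕ) (Ici n), P = truncPermMatrix ℂ n μ := by
  obtain ⟨σ, hσ⟩ := hP
  refine ⟨σ.extendDomain Fin.equivSubtype, extendDomain_mem_fixingSubgroup_Ici σ, ?_⟩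
  ext i j
  simp [hσ, truncPermMatrix_apply, extendDomain_apply_lt σ j.isLt, Fin.ext_iff]

end Matrices

/-- Every `n × n` permutation matrix (`n` a power of 2) is in `B*B`. -/
theorem permutation_in_BStarB (b n : ℕ) (hn : n = 2 ^ b)
    (P : Matrix (Fin n) (Fin n) ℂ) (hP : IsPermutationMatrix n P) :
    ∃ M1 M2 : Matrix (Fin n) (Fin n) ℂ,
      IsButterflyMatrix n M1 ∧ IsButterflyMatrix n M2 ∧ P = M1ᴴ * M2 := by
  subst hn
  obtain ⟨μ, hμ, rfl⟩ := hP.exists_eq_truncPermMatrix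
  obtain ⟨δ, ε, hstages, rfl⟩ := exists_butterflyPerms_decomposition b hμ
  have hε : stageProd b ε ∈ fixingSubgroup (Perm ℕ) (Ici (2 ^ b)) :=
    stageProd_mem fun t h₁ h₂ => (mem_butterflyPerms.mp (hstages t h₁ h₂).2).1
  exact ⟨_, _, isButterflyMatrix_truncPermMatrix_stageProd fun t h₁ h₂ => (hstages t h₁ h₂).1,
    isButterflyMatrix_truncPermMatrix_stageProd fun t h₁ h₂ => (hstages t h₁ h₂).2,
    by rw [truncPermMatrix_mul _ hε, truncPermMatrix_inv]⟩
end
end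

section
/- Let n be a power of 2, let P_br be the n × n bit-reversal permutation matrix, and let M1 be any butterfly matrix of size n over ℂ. Then there exists a butterfly matrix M2 of size n such that M1* = P_br · M2 · P_br. -/
/-!
A butterfly factor of block size `2 ^ (s + 1)` is exactly a matrix supported on the pairs
`(i, j)` whose binary expansions agree except possibly in bit `s`; this pattern is invariant
under conjugate transposition. Conjugating by the bit-reversal permutation moves bit `s` to
bit `b - 1 - s`, so it turns such a factor into one of block size `2 ^ (b - s)`. Since
`(B_n ⋯ B_2)ᴴ = B_2ᴴ ⋯ B_nᴴ` and conjugation by a permutation is multiplicative, the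
bit-reversal conjugate of `M1ᴴ` is a product of factors of block sizes `n, …, 2` in this
order, i.e. a butterfly matrix `M2`; bit reversal being an involution, `M1ᴴ = P_br M2 P_br`.
-/

noncomputable section

open Matrix

theorem bitRev_succ (b x : ℕ) : bitRev (b + 1) x = Nat.bit (x.testBit b) (bitRev b x) := by
  rw [Nat.bit_val, bitRev, Finset.sum_range_succ, bitRev, Finset.mul_sum, Nat.toNat_testBit]
  congr 1
  · refine Finset.sum_congr rfl fun t ht => ?_
    rw [Finset.mem_range] at ht
    rw [show b + 1 - 1 - t = b - 1 - t + 1 by omega, pow_succ]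
    ring
  · simp

theorem testBit_bitRev (b x u : ℕ) :
    (bitRev b x).testBit u = (decide (u < b) && x.testBit (b - 1 - u)) := by
  induction b generalizing u with
  | zero => simp [bitRev]
  | succ b ih =>
    rw [bitRev_succ]
    cases u with
    | zero => simp
    | succ u => simp [Nat.testBit_bit_succ, ih, show b - 1 - u = b + 1 - 1 - (u + 1) by omega]

theorem bitRev_lt_two_pow (b x : ℕ) : bitRev b x < 2 ^ b :=
  Nat.lt_pow_two_of_testBit _ fun u hu => by simp [testBit_bitRev, Nat.not_lt.mpr hu]

theorem bitRev_bitRev {b x : ℕ} (hx : x < 2 ^ b) : bitRev b (bitRev b x) = x := by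
  refine Nat.eq_of_testBit_eq fun u => ?_
  by_cases hu : u < b
  · simp [testBit_bitRev, hu, show b - 1 - (b - 1 - u) = u by omega, show b - 1 - u < b by omega]
  · have hle : 2 ^ b ≤ 2 ^ u := Nat.pow_le_pow_right two_pos (by omega)
    rw [Nat.testBit_lt_two_pow ((bitRev_lt_two_pow b _).trans_le hle),
      Nat.testBit_lt_two_pow (hx.trans_le hle)]

def bitRevPerm (b : ℕ) : Equiv.Perm (Fin (2 ^ b)) :=
  Function.Involutive.toPerm (fun i => ⟨bitRev b i, bitRev_lt_two_pow b i⟩)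
    fun i => Fin.ext (bitRev_bitRev i.isLt)

@[simp]
theorem val_bitRevPerm (b : ℕ) (i : Fin (2 ^ b)) : (bitRevPerm b i : ℕ) = bitRev b i := rfl

@[simp]
theorem bitRevPerm_bitRevPerm (b : ℕ) (i : Fin (2 ^ b)) : bitRevPerm b (bitRevPerm b i) = i :=
  Fin.ext (bitRev_bitRev i.isLt)

@[simp]
theorem bitRevPerm_symm (b : ℕ) : (bitRevPerm b).symm = bitRevPerm b :=
  Function.Involutive.toPerm_symm _

theorem testBit_eq_testBit_bitRevPerm (b : ℕ) (i : Fin (2 ^ b)) (u : ℕ) :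
    (i : ℕ).testBit u = (decide (u < b) && (bitRevPerm b i : ℕ).testBit (b - 1 - u)) := by
  conv_lhs => rw [← bitRevPerm_bitRevPerm b i]
  exact testBit_bitRev _ _ _

theorem div_two_pow_succ_eq_and_mod_two_pow_eq_iff {i j s : ℕ} :
    i / 2 ^ (s + 1) = j / 2 ^ (s + 1) ∧ i % 2 ^ s = j % 2 ^ s ↔
      ∀ u ≠ s, i.testBit u = j.testBit u := by
  constructor
  · rintro ⟨hdiv, hmod⟩ u hu
    rcases lt_or_gt_of_ne hu with h | h
    · simpa [Nat.testBit_mod_two_pow, h] using congrArg (Nat.testBit · u) hmod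
    · simpa [Nat.testBit_div_two_pow, show u - (s + 1) + (s + 1) = u by omega]
        using congrArg (Nat.testBit · (u - (s + 1))) hdiv
  · intro h
    constructor <;> refine Nat.eq_of_testBit_eq fun u => ?_
    · simpa [Nat.testBit_div_two_pow] using h (u + (s + 1)) (by omega)
    · by_cases hu : u < s
      · simp [Nat.testBit_mod_two_pow, hu, h u (by omega)]
      · simp [Nat.testBit_mod_two_pow, hu]

theorem isButterflyFactorMatrix_two_pow_succ_iff {n s : ℕ} {B : Matrix (Fin n) (Fin n) ℂ} :
    IsButterflyFactorMatrix n (2 ^ (s + 1)) B ↔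
      2 ^ (s + 1) ∣ n ∧ ∀ i j, B i j ≠ 0 → ∀ u ≠ s, (i : ℕ).testBit u = (j : ℕ).testBit u := by
  have two_le : 2 ≤ 2 ^ (s + 1) := Nat.le_self_pow (by omega) 2
  have half : 2 ^ (s + 1) / 2 = 2 ^ s := by rw [pow_succ, Nat.mul_div_cancel _ two_pos]
  simp only [IsButterflyFactorMatrix, half, div_two_pow_succ_eq_and_mod_two_pow_eq_iff,
    two_le, true_and]

theorem IsButterflyFactorMatrix.reindex_bitRevPerm_conjTranspose {b s : ℕ} (hs : s < b)
    {B : Matrix (Fin (2 ^ b)) (Fin (2 ^ b)) ℂ} (hB : IsButterflyFactorMatrix (2 ^ b) (2 ^ (s + 1)) B) :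
    IsButterflyFactorMatrix (2 ^ b) (2 ^ (b - 1 - s + 1))
      (reindex (bitRevPerm b) (bitRevPerm b) Bᴴ) := by
  rw [isButterflyFactorMatrix_two_pow_succ_iff] at hB ⊢
  refine ⟨pow_dvd_pow 2 (by omega), fun i j hij u hu => ?_⟩
  have hji : B (bitRevPerm b j) (bitRevPerm b i) ≠ 0 := by
    simpa [reindex_apply, conjTranspose_apply] using hij
  rw [testBit_eq_testBit_bitRevPerm b i, testBit_eq_testBit_bitRevPerm b j]
  by_cases hub : u < b
  · rw [hB.2 _ _ hji (b - 1 - u) (by omega)]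
  · simp [hub]

theorem List.reverse_ofFn {α : Type*} {m : ℕ} (f : Fin m → α) :
    (List.ofFn f).reverse = List.ofFn fun t => f t.rev := by
  refine List.ext_getElem (by simp) fun i h₁ h₂ => ?_
  simp only [List.getElem_reverse, List.getElem_ofFn, List.length_ofFn]
  congr 1
  ext
  simp [Fin.val_rev]
  omega

theorem IsButterflyMatrix.reindex_bitRevPerm_conjTranspose {b : ℕ}
    {M : Matrix (Fin (2 ^ b)) (Fin (2 ^ b)) ℂ} (hM : IsButterflyMatrix (2 ^ b) M) :
    IsButterflyMatrix (2 ^ b) (reindex (bitRevPerm b) (bitRevPerm b) Mᴴ) := by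
  obtain ⟨b', hb', B, hB, rfl⟩ := hM
  obtain rfl : b = b' := Nat.pow_right_injective le_rfl hb'
  refine ⟨b, rfl, fun t => reindex (bitRevPerm b) (bitRevPerm b) (B (b + 1 - t))ᴴ,
    fun t ht₁ htb => ?_, ?_⟩
  · have hBt := hB (b - t + 1) (by omega) (by omega)
    dsimp only
    rw [show b + 1 - t = b - t + 1 by omega]
    convert hBt.reindex_bitRevPerm_conjTranspose (by omega) using 2
    omega
  · rw [← coe_reindexAlgEquiv ℂ ℂ, conjTranspose_list_prod, List.map_ofFn, List.reverse_ofFn,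
      map_list_prod, List.map_ofFn]
    congr 2
    ext1 t
    simp only [Function.comp_apply, Fin.val_rev]
    congr 3
    omega

/-- For the `n × n` bit-reversal permutation matrix `P_br` and any
butterfly matrix `M1` of size `n = 2^b`, there is a butterfly matrix `M2` with
`M1ᴴ = P_br · M2 · P_br`. -/
theorem conjTranspose_butterfly_bitrev (b n : ℕ) (hn : n = 2 ^ b)
    (M1 : Matrix (Fin n) (Fin n) ℂ) (hM1 : IsButterflyMatrix n M1)
    (Pbr : Matrix (Fin n) (Fin n) ℂ)
    (hPbr : ∀ i j : Fin n, Pbr i j = if i.val = bitRev b j.val then 1 else 0) :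
    ∃ M2 : Matrix (Fin n) (Fin n) ℂ,
      IsButterflyMatrix n M2 ∧ M1ᴴ = Pbr * M2 * Pbr := by
  subst hn
  have hP : Pbr = (bitRevPerm b).toPEquiv.toMatrix := by
    ext i j
    simp only [hPbr, PEquiv.toMatrix_apply, Equiv.toPEquiv_apply, Option.mem_some_iff,
      ← Equiv.eq_symm_apply, bitRevPerm_symm, Fin.ext_iff, val_bitRevPerm]
  refine ⟨_, hM1.reindex_bitRevPerm_conjTranspose, ?_⟩
  rw [hP, PEquiv.toMatrix_toPEquiv_mul, PEquiv.mul_toMatrix_toPEquiv]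
  ext i j
  simp
end
end

section
/- Let n be a power of 2 and let A, B be n × n matrices over ℂ with A ∈ (BB*)^{w1}_e and B ∈ (BB*)^{w2}_e. Then A·B ∈ (BB*)^{w1+w2}_e. -/
noncomputable section

open Matrix

/-! Let `S` select the first `n` of `e * n` coordinates, so that `A = S E₁ Sᵀ` and
`B = S E₂ Sᵀ`. Then `A B = S (E₁ P E₂) Sᵀ`, where `P = Sᵀ S` is a real diagonal projection.
`P` is absorbed into the last `BB*` factor `M₁ M₂ᴴ` of `E₁`, since `M₁ M₂ᴴ P = M₁ (P M₂)ᴴ` and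
left multiplication by a diagonal matrix preserves the support pattern of the outermost
butterfly factor of `M₂`. Hence `E₁ P E₂ ∈ (BB*)^(w₁ + w₂)`. -/

namespace IsButterflyFactorMatrix

lemma diagonal_mul {n k : ℕ} {B : Matrix (Fin n) (Fin n) ℂ} (hB : IsButterflyFactorMatrix n k B)
    (d : Fin n → ℂ) : IsButterflyFactorMatrix n k (diagonal d * B) := by
  obtain ⟨hk, hkn, hsupp⟩ := hB
  refine ⟨hk, hkn, fun i j hij => hsupp i j fun h => hij ?_⟩
  rw [Matrix.diagonal_mul, h, mul_zero]

end IsButterflyFactorMatrix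

-- For `N = 1` the only butterfly matrix is the empty product `1`.
lemma IsButterflyMatrix.diagonal_mul {N : ℕ} {M : Matrix (Fin N) (Fin N) ℂ}
    (hM : IsButterflyMatrix N M) (d : Fin N → ℂ) (hd : N = 1 → d = 1) :
    IsButterflyMatrix N (diagonal d * M) := by
  obtain ⟨b, hb, B, hB, rfl⟩ := hM
  cases b with
  | zero =>
    rw [hd (by simpa using hb), Pi.one_def, diagonal_one, one_mul]
    exact ⟨0, hb, B, hB, rfl⟩
  | succ m =>
    refine ⟨m + 1, hb, Function.update B (m + 1) (diagonal d * B (m + 1)), fun t ht1 ht2 => ?_, ?_⟩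
    · rcases eq_or_ne t (m + 1) with rfl | ht
      · simpa using (hB _ ht1 ht2).diagonal_mul d
      · simpa [ht] using hB t ht1 ht2
    · have htail (i : Fin m) : m - (i : ℕ) ≠ m + 1 := by omega
      simp [List.ofFn_succ, Function.update_of_ne (htail _), mul_assoc]

lemma InBBStar.mul_diagonal {N : ℕ} {M : Matrix (Fin N) (Fin N) ℂ} (hM : InBBStar N M)
    (d : Fin N → ℂ) (hd : star d = d) (hd1 : N = 1 → d = 1) :
    InBBStar N (M * diagonal d) := by
  obtain ⟨M1, M2, hM1, hM2, rfl⟩ := hM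
  refine ⟨M1, diagonal d * M2, hM1, hM2.diagonal_mul d hd1, ?_⟩
  rw [conjTranspose_mul, diagonal_conjTranspose, hd, mul_assoc]

namespace InBBStarPow

lemma eq_one {N : ℕ} {M : Matrix (Fin N) (Fin N) ℂ} (hM : InBBStarPow N 0 M) : M = 1 := by
  obtain ⟨f, -, rfl⟩ := hM
  simp

lemma mul {N w₁ w₂ : ℕ} {M₁ M₂ : Matrix (Fin N) (Fin N) ℂ} (h₁ : InBBStarPow N w₁ M₁)
    (h₂ : InBBStarPow N w₂ M₂) : InBBStarPow N (w₁ + w₂) (M₁ * M₂) := by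
  obtain ⟨f, hf, rfl⟩ := h₁
  obtain ⟨g, hg, rfl⟩ := h₂
  refine ⟨Fin.append f g, Fin.addCases (by simpa using hf) (by simpa using hg), ?_⟩
  rw [List.ofFn_fin_append, List.prod_append]

lemma mul_diagonal {N w : ℕ} {M : Matrix (Fin N) (Fin N) ℂ} (hM : InBBStarPow N w M) (hw : 0 < w)
    (d : Fin N → ℂ) (hd : star d = d) (hd1 : N = 1 → d = 1) :
    InBBStarPow N w (M * diagonal d) := by
  obtain ⟨m, rfl⟩ : ∃ m, w = m + 1 := ⟨w - 1, by omega⟩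
  obtain ⟨f, hf, rfl⟩ := hM
  refine ⟨Function.update f (Fin.last m) (f (Fin.last m) * diagonal d), fun i => ?_, ?_⟩
  · rcases eq_or_ne i (Fin.last m) with rfl | hi
    · simpa using (hf _).mul_diagonal d hd hd1
    · simpa [hi] using hf i
  · rw [List.ofFn_succ', List.ofFn_succ', List.prod_concat, List.prod_concat]
    simp [Fin.castSucc_ne_last, mul_assoc]

end InBBStarPow

lemma inBBStarPowExp_iff {n w e : ℕ} (h : n ≤ e * n) {M : Matrix (Fin n) (Fin n) ℂ} :
    InBBStarPowExp n w e M ↔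
      ∃ E, InBBStarPow (e * n) w E ∧ M = E.submatrix (Fin.castLE h) (Fin.castLE h) := by
  refine exists_congr fun E => and_congr_right fun _ => ⟨fun hM => ?_, ?_⟩
  · ext i j
    exact hM i j _ _
  · rintro rfl i j _ _
    rfl

lemma submatrix_mul_diagonal_indicator_mul {l l' m o o' κ α : Type*} [Fintype m] [Fintype κ]
    [DecidableEq κ] [Semiring α] (A : Matrix l κ α) (B : Matrix κ o α) (r : l' → l) (c : m → κ)
    (s : o' → o) (hc : Function.Injective c) :
    (A * diagonal (fun k => if k ∈ Set.range c then (1 : α) else 0) * B).submatrix r s =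
      A.submatrix r c * B.submatrix c s := by
  ext i j
  rw [submatrix_apply, mul_apply, mul_apply]
  refine (Fintype.sum_of_injective c hc _ _ (fun k hk => ?_) fun x => ?_).symm <;>
    simp_all [mul_diagonal]

theorem BBStar_product_closure_general (n w1 w2 e : ℕ)
    (A B : Matrix (Fin n) (Fin n) ℂ)
    (hA : InBBStarPowExp n w1 e A) (hB : InBBStarPowExp n w2 e B) :
    InBBStarPowExp n (w1 + w2) e (A * B) := by
  rcases Nat.eq_zero_or_pos e with rfl | he
  · obtain ⟨E1, hE1, -⟩ := hA
    obtain ⟨E2, hE2, -⟩ := hB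
    exact ⟨E1 * E2, hE1.mul hE2, fun i _ hi => absurd hi (by simp)⟩
  have hle : n ≤ e * n := Nat.le_mul_of_pos_left n he
  obtain ⟨E1, hE1, rfl⟩ := (inBBStarPowExp_iff hle).1 hA
  obtain ⟨E2, hE2, rfl⟩ := (inBBStarPowExp_iff hle).1 hB
  rcases Nat.eq_zero_or_pos w1 with rfl | hw1
  · rw [hE1.eq_one, submatrix_one _ (Fin.castLE_injective hle), one_mul, zero_add]
    exact hB
  set d : Fin (e * n) → ℂ := fun k => if k ∈ Set.range (Fin.castLE hle) then 1 else 0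
  have hd : star d = d := by
    ext k
    simp [d]
  have hd1 (h1 : e * n = 1) : d = 1 := by
    ext k
    have hk : (k : ℕ) < n := by
      have := Nat.eq_one_of_mul_eq_one_left h1
      omega
    simp [d, hk]
  refine (inBBStarPowExp_iff hle).2
    ⟨E1 * diagonal d * E2, (hE1.mul_diagonal hw1 d hd hd1).mul hE2, ?_⟩
  exact (submatrix_mul_diagonal_indicator_mul _ _ _ _ _ (Fin.castLE_injective hle)).symm

/-- If `A ∈ (BB*)^{w1}_e` and `B ∈ (BB*)^{w2}_e` then
`A·B ∈ (BB*)^{w1+w2}_e`. -/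
theorem BBStar_product_closure (b n w1 w2 e : ℕ) (hn : n = 2 ^ b)
    (A B : Matrix (Fin n) (Fin n) ℂ)
    (hA : InBBStarPowExp n w1 e A) (hB : InBBStarPowExp n w2 e B) :
    InBBStarPowExp n (w1 + w2) e (A * B) :=
  BBStar_product_closure_general n w1 w2 e A B hA hB
end
end

section
/- Let n be a power of 2 and let M be an invertible n × n butterfly matrix over ℂ. Then M^{−1} is the conjugate transpose of a butterfly matrix; that is, M^{−1} ∈ B*. -/
noncomputable section

open Matrix

/-!
Inverting a product reverses the order of its factors and conjugate transposition reverses it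
back, so `M⁻¹ᴴ` is the product of the `(B_k)⁻¹ᴴ` in the original order. A butterfly factor
matrix with block size `k` is block diagonal for the partition of the indices by
`(i / k, i % (k / 2))`; its inverse and conjugate transpose are block diagonal for the same
partition, i.e. again butterfly factor matrices.
-/

namespace Matrix

variable {m β R : Type*} [Fintype m] [DecidableEq m] [CommRing R]

/-- A matrix that is block diagonal for `b` is block triangular both for a linear order on `β`
and for its dual, and inverses of block triangular matrices are block triangular. -/
theorem inv_apply_eq_zero_of_ne {M : Matrix m m R} (b : m → β)
    (hM : ∀ i j, b i ≠ b j → M i j = 0) {i j : m} (hij : b i ≠ b j) : M⁻¹ i j = 0 := by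
  by_cases hdet : IsUnit M.det
  · let := invertibleOfIsUnitDet M hdet
    let : LinearOrder β := IsWellOrder.linearOrder WellOrderingRel
    rcases hij.lt_or_gt with hlt | hgt
    · exact blockTriangular_inv_of_blockTriangular (b := OrderDual.toDual ∘ b)
        (fun i j h => hM i j h.ne') hlt
    · exact blockTriangular_inv_of_blockTriangular (b := b) (fun i j h => hM i j h.ne') hgt
  · simp [nonsing_inv_apply_not_isUnit M hdet]

end Matrix

namespace IsButterflyFactorMatrix

variable {n k : ℕ} {B : Matrix (Fin n) (Fin n) ℂ}

theorem inv (hB : IsButterflyFactorMatrix n k B) : IsButterflyFactorMatrix n k B⁻¹ := by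
  obtain ⟨hk, hkn, hsupp⟩ := hB
  let key : Fin n → ℕ × ℕ := fun i => (i.val / k, i.val % (k / 2))
  have hB_block : ∀ i j, key i ≠ key j → B i j = 0 := fun i j =>
    not_imp_comm.mp fun hij => Prod.ext_iff.mpr (hsupp i j hij)
  refine ⟨hk, hkn, fun i j hij => Prod.ext_iff.mp (?_ : key i = key j)⟩
  by_contra hne
  exact hij (Matrix.inv_apply_eq_zero_of_ne key hB_block hne)

theorem conjTranspose (hB : IsButterflyFactorMatrix n k B) : IsButterflyFactorMatrix n k Bᴴ := by
  obtain ⟨hk, hkn, hsupp⟩ := hB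
  refine ⟨hk, hkn, fun i j hij => ?_⟩
  obtain ⟨hdiv, hmod⟩ := hsupp j i (by simpa [Matrix.conjTranspose_apply] using hij)
  exact ⟨hdiv.symm, hmod.symm⟩

end IsButterflyFactorMatrix

theorem IsButterflyMatrix.conjTranspose_inv {n : ℕ} {M : Matrix (Fin n) (Fin n) ℂ}
    (hM : IsButterflyMatrix n M) : IsButterflyMatrix n M⁻¹ᴴ := by
  obtain ⟨b, hnb, B, hB, rfl⟩ := hM
  refine ⟨b, hnb, fun t => (B t)⁻¹ᴴ, fun t ht hb => (hB t ht hb).inv.conjTranspose, ?_⟩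
  rw [Matrix.list_prod_inv_reverse, Matrix.conjTranspose_list_prod, List.map_map,
    List.map_reverse, List.reverse_reverse, List.map_ofFn]
  rfl

theorem butterfly_inverse_in_BStar_general (n : ℕ)
    (M : Matrix (Fin n) (Fin n) ℂ) (hM : IsButterflyMatrix n M) :
    ∃ B : Matrix (Fin n) (Fin n) ℂ, IsButterflyMatrix n B ∧ M⁻¹ = Bᴴ :=
  ⟨M⁻¹ᴴ, hM.conjTranspose_inv, (Matrix.conjTranspose_conjTranspose _).symm⟩

/-- The inverse of an invertible butterfly matrix is the conjugate
transpose of a butterfly matrix. -/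
theorem butterfly_inverse_in_BStar (b n : ℕ) (hn : n = 2 ^ b)
    (M : Matrix (Fin n) (Fin n) ℂ) (hM : IsButterflyMatrix n M) (hinv : IsUnit M) :
    ∃ B : Matrix (Fin n) (Fin n) ℂ, IsButterflyMatrix n B ∧ M⁻¹ = Bᴴ :=
  butterfly_inverse_in_BStar_general n M hM
end
end
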